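/- arXiv:1101.1998 — 11 statements merged into one kernel-verified Lean document; each statement's English description precedes it below -/
import Mathlib

section
/- Let A be a Z×Z-graded domain over a field k generated by x_1, x_2, x_3 where deg x_1 = deg x_2 = (1,0) and deg x_3 = (0,1). Suppose A has two defining relations of bidegree (1,1). Then x_3 is a normal element of A. -/
noncomputable section

/-- An element `y` of a ring is *normal* if `yA = Ay`. -/
def IsNormalElem {A : Type*} [Mul A] (y : A) : Prop :=
  (∀ a : A, ∃ b : A, y * a = b * y) ∧ (∀ a : A, ∃ b : A, a * y = y * b)

open FreeAlgebra

/-!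
Let `V = k x₁ ⊕ k x₂`. The four monomials `x₃x₁, x₃x₂, x₁x₃, x₂x₃` span at most a
4-dimensional space in the free algebra, and the two independent relations lie in the kernel of
`π` on it, so their images span a space `W ⊆ A` of dimension at most `2`. Since `A` is a domain
and `x₃ ≠ 0`, both `x₃V` and `Vx₃` are 2-dimensional subspaces of `W`, hence `x₃V = W = Vx₃`.
As `x₁, x₂, x₃` generate `A`, this makes `x₃` normal.
-/

open Module Submodule

theorem Submodule.finrank_map_add_card_le {K V W : Type*} [DivisionRing K] [AddCommGroup V]
    [Module K V] [AddCommGroup W] [Module K W] (f : V →ₗ[K] W) (U : Submodule K V)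
    [FiniteDimensional K U] {ι : Type*} [Fintype ι] {v : ι → V} (hv : LinearIndependent K v)
    (hvU : ∀ i, v i ∈ U) (hvf : ∀ i, f (v i) = 0) :
    finrank K (U.map f) + Fintype.card ι ≤ finrank K U := by
  let g := f.domRestrict U
  let w : ι → LinearMap.ker g := fun i => ⟨⟨v i, hvU i⟩, hvf i⟩
  have hw : LinearIndependent K w :=
    .of_comp (U.subtype ∘ₗ (LinearMap.ker g).subtype) hv
  have hrank := g.finrank_range_add_finrank_ker
  rw [LinearMap.range_domRestrict] at hrank
  have hcard := hw.fintype_card_le_finrank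
  omega

theorem finrank_span_insert_insert_insert_singleton_le {K M : Type*} [DivisionRing K]
    [AddCommGroup M] [Module K M] (a b c d : M) :
    finrank K (span K ({a, b, c, d} : Set M)) ≤ 4 := by
  have hrange : ({a, b, c, d} : Set M) = Set.range ![a, b, c, d] := by
    simp only [Matrix.range_cons, Matrix.range_empty, Set.union_empty, Set.singleton_union]
  rw [hrange]
  exact (finrank_range_le_card _).trans (by simp)

theorem Submodule.map_mulLeft_eq_map_mulRight_of_finrank_le {k A : Type*} [Field k] [Ring A]
    [NoZeroDivisors A] [Algebra k A] {y : A} (hy : y ≠ 0) (V W : Submodule k A)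
    [FiniteDimensional k W] (hW : finrank k W ≤ finrank k V)
    (hl : V.map (LinearMap.mulLeft k y) ≤ W) (hr : V.map (LinearMap.mulRight k y) ≤ W) :
    V.map (LinearMap.mulLeft k y) = V.map (LinearMap.mulRight k y) := by
  have hfl := (V.equivMapOfInjective (LinearMap.mulLeft k y) (mul_right_injective₀ hy)).finrank_eq
  have hfr := (V.equivMapOfInjective (LinearMap.mulRight k y) (mul_left_injective₀ hy)).finrank_eq
  rw [eq_of_le_of_finrank_le hl (hfl ▸ hW), eq_of_le_of_finrank_le hr (hfr ▸ hW)]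

theorem isNormalElem_of_adjoin_eq_top {k A : Type*} [CommSemiring k] [Semiring A] [Algebra k A]
    {s : Set A} (hs : Algebra.adjoin k s = ⊤) {y : A} (hl : ∀ x ∈ s, ∃ b, y * x = b * y)
    (hr : ∀ x ∈ s, ∃ b, x * y = y * b) : IsNormalElem y := by
  refine ⟨fun a => ?_, fun a => ?_⟩
  · induction (hs ▸ Algebra.mem_top : a ∈ Algebra.adjoin k s) using Algebra.adjoin_induction with
    | mem x hx => exact hl x hx
    | algebraMap r => exact ⟨algebraMap k A r, (Algebra.commutes r y).symm⟩
    | add a a' _ _ ha ha' =>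
      obtain ⟨⟨b, hb⟩, ⟨b', hb'⟩⟩ := And.intro ha ha'
      exact ⟨b + b', by rw [mul_add, hb, hb', add_mul]⟩
    | mul a a' _ _ ha ha' =>
      obtain ⟨⟨b, hb⟩, ⟨b', hb'⟩⟩ := And.intro ha ha'
      exact ⟨b * b', by rw [← mul_assoc, hb, mul_assoc, hb', mul_assoc]⟩
  · induction (hs ▸ Algebra.mem_top : a ∈ Algebra.adjoin k s) using Algebra.adjoin_induction with
    | mem x hx => exact hr x hx
    | algebraMap r => exact ⟨algebraMap k A r, Algebra.commutes r y⟩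
    | add a a' _ _ ha ha' =>
      obtain ⟨⟨b, hb⟩, ⟨b', hb'⟩⟩ := And.intro ha ha'
      exact ⟨b + b', by rw [add_mul, hb, hb', mul_add]⟩
    | mul a a' _ _ ha ha' =>
      obtain ⟨⟨b, hb⟩, ⟨b', hb'⟩⟩ := And.intro ha ha'
      exact ⟨b * b', by rw [mul_assoc, hb', ← mul_assoc, hb, mul_assoc]⟩

theorem Submodule.isNormalElem_of_map_mulLeft_eq_map_mulRight {k A : Type*} [CommSemiring k]
    [Semiring A] [Algebra k A] {y : A} {V : Submodule k A}
    (hV : V.map (LinearMap.mulLeft k y) = V.map (LinearMap.mulRight k y))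
    (hgen : Algebra.adjoin k (insert y (V : Set A)) = ⊤) : IsNormalElem y := by
  refine isNormalElem_of_adjoin_eq_top hgen ?_ ?_ <;> rintro x (rfl | hx)
  · exact ⟨x, rfl⟩
  · obtain ⟨b, -, hb⟩ := hV ▸ mem_map_of_mem (f := LinearMap.mulLeft k y) hx
    exact ⟨b, hb.symm⟩
  · exact ⟨x, rfl⟩
  · obtain ⟨b, -, hb⟩ := hV.symm ▸ mem_map_of_mem (f := LinearMap.mulRight k y) hx
    exact ⟨b, hb.symm⟩

theorem normal_from_two_relations_of_bidegree_one_one_general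
    (k : Type) [Field k]
    (A : Type) [Ring A] [IsDomain A] [Algebra k A]
    (x₁ x₂ x₃ : A)
    (hgen : Algebra.adjoin k ({x₁, x₂, x₃} : Set A) = ⊤)
    (hind : LinearIndependent k ![x₁, x₂])
    (π : FreeAlgebra k (Fin 3) →ₐ[k] A)
    (hπ0 : π (FreeAlgebra.ι k 0) = x₁) (hπ1 : π (FreeAlgebra.ι k 1) = x₂)
    (hπ2 : π (FreeAlgebra.ι k 2) = x₃)
    (r₁ r₂ : FreeAlgebra k (Fin 3))
    (hr₁ : r₁ ∈ Submodule.span k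
      {FreeAlgebra.ι k (2 : Fin 3) * FreeAlgebra.ι k 0,
       FreeAlgebra.ι k (2 : Fin 3) * FreeAlgebra.ι k 1,
       FreeAlgebra.ι k (0 : Fin 3) * FreeAlgebra.ι k 2,
       FreeAlgebra.ι k (1 : Fin 3) * FreeAlgebra.ι k 2})
    (hr₂ : r₂ ∈ Submodule.span k
      {FreeAlgebra.ι k (2 : Fin 3) * FreeAlgebra.ι k 0,
       FreeAlgebra.ι k (2 : Fin 3) * FreeAlgebra.ι k 1,
       FreeAlgebra.ι k (0 : Fin 3) * FreeAlgebra.ι k 2,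
       FreeAlgebra.ι k (1 : Fin 3) * FreeAlgebra.ι k 2})
    (hrind : LinearIndependent k ![r₁, r₂])
    (hrel1 : π r₁ = 0) (hrel2 : π r₂ = 0) :
    IsNormalElem x₃ := by
  rcases eq_or_ne x₃ 0 with rfl | hx₃
  · exact ⟨fun _ => ⟨0, by simp⟩, fun _ => ⟨0, by simp⟩⟩
  set U := span k {ι k (2 : Fin 3) * ι k 0, ι k (2 : Fin 3) * ι k 1,
    ι k (0 : Fin 3) * ι k 2, ι k (1 : Fin 3) * ι k 2}
  set V := span k (Set.range ![x₁, x₂])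
  have : FiniteDimensional k U := .span_of_finite k (Set.toFinite _)
  have hUW : U.map π.toLinearMap = span k {x₃ * x₁, x₃ * x₂, x₁ * x₃, x₂ * x₃} := by
    simp [U, map_span, Set.image_insert_eq, hπ0, hπ1, hπ2]
  have hW : finrank k (U.map π.toLinearMap) ≤ finrank k V := by
    have hker := U.finrank_map_add_card_le π.toLinearMap hrind
      (by simp [Fin.forall_fin_two, hr₁, hr₂]) (by simp [Fin.forall_fin_two, hrel1, hrel2])
    have hU : finrank k U ≤ 4 := finrank_span_insert_insert_insert_singleton_le _ _ _ _
    rw [finrank_span_eq_card hind]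
    simp only [Fintype.card_fin] at hker ⊢
    omega
  refine V.isNormalElem_of_map_mulLeft_eq_map_mulRight
    (V.map_mulLeft_eq_map_mulRight_of_finrank_le hx₃ _ hW ?_ ?_) ?_
  · rw [hUW, map_span_le, Set.forall_mem_range, Fin.forall_fin_two]
    exact ⟨subset_span (by simp), subset_span (by simp)⟩
  · rw [hUW, map_span_le, Set.forall_mem_range, Fin.forall_fin_two]
    exact ⟨subset_span (by simp), subset_span (by simp)⟩
  · refine top_le_iff.mp (hgen ▸ Algebra.adjoin_mono ?_)
    rintro _ (rfl | rfl | rfl)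
    exacts [Or.inr (subset_span ⟨0, rfl⟩), Or.inr (subset_span ⟨1, rfl⟩), Or.inl rfl]

/-- let `A` be a `ℤ×ℤ`-graded domain generated by `x₁, x₂` of bidegree `(1,0)`
and `x₃` of bidegree `(0,1)` (with `x₁, x₂` linearly independent over `k`).  If `A` has two
(linearly independent) defining relations of bidegree `(1,1)` — i.e. two linearly
independent elements of the span of `x₃x₁, x₃x₂, x₁x₃, x₂x₃` in the free algebra which map
to zero in `A` — then `x₃` is a normal element of `A`. -/
theorem normal_from_two_relations_of_bidegree_one_one
    (k : Type) [Field k] [IsAlgClosed k] [CharZero k]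
    (A : Type) [Ring A] [IsDomain A] [Algebra k A]
    (𝒜 : ℤ × ℤ → Submodule k A) [GradedAlgebra 𝒜]
    (x₁ x₂ x₃ : A)
    (h1 : x₁ ∈ 𝒜 (1, 0)) (h2 : x₂ ∈ 𝒜 (1, 0)) (h3 : x₃ ∈ 𝒜 (0, 1))
    (hgen : Algebra.adjoin k ({x₁, x₂, x₃} : Set A) = ⊤)
    (hind : LinearIndependent k ![x₁, x₂])
    (π : FreeAlgebra k (Fin 3) →ₐ[k] A)
    (hπ0 : π (FreeAlgebra.ι k 0) = x₁) (hπ1 : π (FreeAlgebra.ι k 1) = x₂)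
    (hπ2 : π (FreeAlgebra.ι k 2) = x₃)
    (r₁ r₂ : FreeAlgebra k (Fin 3))
    (hr₁ : r₁ ∈ Submodule.span k
      {FreeAlgebra.ι k (2 : Fin 3) * FreeAlgebra.ι k 0,
       FreeAlgebra.ι k (2 : Fin 3) * FreeAlgebra.ι k 1,
       FreeAlgebra.ι k (0 : Fin 3) * FreeAlgebra.ι k 2,
       FreeAlgebra.ι k (1 : Fin 3) * FreeAlgebra.ι k 2})
    (hr₂ : r₂ ∈ Submodule.span k
      {FreeAlgebra.ι k (2 : Fin 3) * FreeAlgebra.ι k 0,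
       FreeAlgebra.ι k (2 : Fin 3) * FreeAlgebra.ι k 1,
       FreeAlgebra.ι k (0 : Fin 3) * FreeAlgebra.ι k 2,
       FreeAlgebra.ι k (1 : Fin 3) * FreeAlgebra.ι k 2})
    (hrind : LinearIndependent k ![r₁, r₂])
    (hrel1 : π r₁ = 0) (hrel2 : π r₂ = 0) :
    IsNormalElem x₃ :=
  normal_from_two_relations_of_bidegree_one_one_general k A x₁ x₂ x₃ hgen hind π hπ0 hπ1 hπ2 r₁ r₂
    hr₁ hr₂ hrind hrel1 hrel2
end
end

section
/- Let A be a Z×Z-graded algebra over k generated by x_1, x_2, x_3 (deg x_1 = deg x_2 = (1,0), deg x_3 = (0,1)), which is a domain, subject to relations x_2x_1 = p x_1x_2, x_3x_2 = a x_3x_1 + x_1x_3 + b x_2x_3, and x_3^2 x_1 = c x_1x_3^2 + d x_2x_3^2 + e x_3x_1x_3 with n = 1. If d = bc, then x_3 · (x_3x_1 - c x_2x_3 + (ac - e) x_1x_3) = 0 in A; in particular, if A is a domain and x_3x_1 - c x_2x_3 + (ac-e)x_1x_3 ≠ 0 in A, then d ≠ bc. -/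
noncomputable section

open FreeAlgebra

variable (k : Type) [Field k]

/-- Generators of the free algebra on three variables. -/
abbrev X (i : Fin 3) : FreeAlgebra k (Fin 3) := FreeAlgebra.ι k i

/-- The defining relations: `x₂x₁ = p x₁x₂`, `x₃x₂ = a x₃x₁ + x₁x₃ + b x₂x₃` (`n = 1`),
`x₃²x₁ = c x₁x₃² + d x₂x₃² + e x₃x₁x₃`, together with a fourth relation `r₄ = 0`. -/
inductive rel5 (p a b c d e : k) (r₄ : FreeAlgebra k (Fin 3)) :
    FreeAlgebra k (Fin 3) → FreeAlgebra k (Fin 3) → Prop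
  | r1 : rel5 p a b c d e r₄ (X k 1 * X k 0) (p • (X k 0 * X k 1))
  | r2 : rel5 p a b c d e r₄ (X k 2 * X k 1)
      (a • (X k 2 * X k 0) + X k 0 * X k 2 + b • (X k 1 * X k 2))
  | r3 : rel5 p a b c d e r₄ (X k 2 * X k 2 * X k 0)
      (c • (X k 0 * (X k 2 * X k 2)) + d • (X k 1 * (X k 2 * X k 2)) +
        e • (X k 2 * X k 0 * X k 2))
  | r4 : rel5 p a b c d e r₄ r₄ 0

/-- The algebra `A`. -/
abbrev Alg5 (p a b c d e : k) (r₄ : FreeAlgebra k (Fin 3)) := RingQuot (rel5 k p a b c d e r₄)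

/-- The images of the generators in `A`. -/
abbrev gen5 (p a b c d e : k) (r₄ : FreeAlgebra k (Fin 3)) (i : Fin 3) :
    Alg5 k p a b c d e r₄ :=
  RingQuot.mkAlgHom k (rel5 k p a b c d e r₄) (X k i)

/-! Multiplying the second relation on the right by `x₃` expresses `x₁x₃²` through `x₃x₂x₃`,
`x₃x₁x₃` and `x₂x₃²`; substituted into the third relation, the `x₂x₃²` terms cancel exactly when
`d = bc`, and every remaining monomial begins with `x₃`. -/

theorem mul_factor_eq_zero_of_relations {K R : Type*} [CommRing K] [Ring R] [Algebra K R]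
    {a b c d e : K} {x₁ x₂ x₃ : R} (hd : d = b * c)
    (h₂ : x₃ * x₂ = a • (x₃ * x₁) + x₁ * x₃ + b • (x₂ * x₃))
    (h₃ : x₃ * x₃ * x₁ =
      c • (x₁ * (x₃ * x₃)) + d • (x₂ * (x₃ * x₃)) + e • (x₃ * x₁ * x₃)) :
    x₃ * (x₃ * x₁ - c • (x₂ * x₃) + (a * c - e) • (x₁ * x₃)) = 0 := by
  have h₂₃ : x₃ * x₂ * x₃ = a • (x₃ * x₁ * x₃) + x₁ * (x₃ * x₃) + b • (x₂ * (x₃ * x₃)) := by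
    simp only [h₂, add_mul, smul_mul_assoc, mul_assoc]
  calc x₃ * (x₃ * x₁ - c • (x₂ * x₃) + (a * c - e) • (x₁ * x₃))
      = x₃ * x₃ * x₁ - c • (x₃ * x₂ * x₃) + (a * c - e) • (x₃ * x₁ * x₃) := by
        simp only [mul_add, mul_sub, mul_smul_comm, mul_assoc]
    _ = 0 := by
        rw [h₃, h₂₃, hd]
        module

section

variable (p a b c d e : k) (r₄ : FreeAlgebra k (Fin 3))

theorem gen5_rel2 :
    gen5 k p a b c d e r₄ 2 * gen5 k p a b c d e r₄ 1 =
      a • (gen5 k p a b c d e r₄ 2 * gen5 k p a b c d e r₄ 0) +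
        gen5 k p a b c d e r₄ 0 * gen5 k p a b c d e r₄ 2 +
        b • (gen5 k p a b c d e r₄ 1 * gen5 k p a b c d e r₄ 2) := by
  have h := RingQuot.mkAlgHom_rel k (rel5.r2 (p := p) (a := a) (b := b) (c := c) (d := d)
    (e := e) (r₄ := r₄))
  simp only [map_add, map_mul, map_smul] at h
  exact h

theorem gen5_rel3 :
    gen5 k p a b c d e r₄ 2 * gen5 k p a b c d e r₄ 2 * gen5 k p a b c d e r₄ 0 =
      c • (gen5 k p a b c d e r₄ 0 * (gen5 k p a b c d e r₄ 2 * gen5 k p a b c d e r₄ 2)) +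
        d • (gen5 k p a b c d e r₄ 1 * (gen5 k p a b c d e r₄ 2 * gen5 k p a b c d e r₄ 2)) +
        e • (gen5 k p a b c d e r₄ 2 * gen5 k p a b c d e r₄ 0 * gen5 k p a b c d e r₄ 2) := by
  have h := RingQuot.mkAlgHom_rel k (rel5.r3 (p := p) (a := a) (b := b) (c := c) (d := d)
    (e := e) (r₄ := r₄))
  simp only [map_add, map_mul, map_smul] at h
  exact h

end

/-- if `d = bc`, then `x₃·(x₃x₁ - c x₂x₃ + (ac - e) x₁x₃) = 0` in `A`; in
particular, if `A` is a domain and `x₃x₁ - c x₂x₃ + (ac - e) x₁x₃ ≠ 0` in `A`, then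
`d ≠ bc`. -/
theorem factored_relation (p a b c d e : k) (r₄ : FreeAlgebra k (Fin 3)) :
    letI x₁ := gen5 k p a b c d e r₄ 0
    letI x₂ := gen5 k p a b c d e r₄ 1
    letI x₃ := gen5 k p a b c d e r₄ 2
    (d = b * c →
      x₃ * (x₃ * x₁ - c • (x₂ * x₃) + (a * c - e) • (x₁ * x₃)) = 0) ∧
    (IsDomain (Alg5 k p a b c d e r₄) →
      x₃ * x₁ - c • (x₂ * x₃) + (a * c - e) • (x₁ * x₃) ≠ 0 → d ≠ b * c) := by
  have factored (hd : d = b * c) :=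
    mul_factor_eq_zero_of_relations hd (gen5_rel2 k p a b c d e r₄) (gen5_rel3 k p a b c d e r₄)
  refine ⟨factored, fun _ hne hd => ?_⟩
  rcases mul_eq_zero.mp (factored hd) with hx₃ | hfactor
  · exact hne (by simp [hx₃])
  · exact hne hfactor
end
end

section
/- For q ∈ k with q ≠ 1 and b ∈ k^×, let A(b,q) = k⟨x_1,x_2,x_3⟩/(x_2x_1 - q^{-1}x_1x_2, x_3x_2 + (q^2 b)^{-1} x_3x_1 - x_1x_3 - b x_2x_3, x_3^2x_1 + q^3b^2 x_1x_3^2 - (q^2+q)b x_3x_1x_3, x_3x_1^2 + q^3b^2 x_1^2x_3 - (q^2+q)b x_1x_3x_1). Then the element y := x_3x_1 - q^2 b x_1x_3 is a normal element of A(b,q), i.e., yA = Ay. -/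
noncomputable section

open FreeAlgebra

variable (k : Type) [Field k]

/-- The defining relations of the algebra `𝒜(b,q)` of family `𝒜`. -/
inductive relA (b q : k) : FreeAlgebra k (Fin 3) → FreeAlgebra k (Fin 3) → Prop
  | r1 : relA b q (X k 1 * X k 0) (q⁻¹ • (X k 0 * X k 1))
  | r2 : relA b q (X k 2 * X k 1)
      (-(q ^ 2 * b)⁻¹ • (X k 2 * X k 0) + X k 0 * X k 2 + b • (X k 1 * X k 2))
  | r3 : relA b q (X k 2 * X k 2 * X k 0)
      (-(q ^ 3 * b ^ 2) • (X k 0 * (X k 2 * X k 2)) + ((q ^ 2 + q) * b) • (X k 2 * X k 0 * X k 2))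
  | r4 : relA b q (X k 2 * (X k 0 * X k 0))
      (-(q ^ 3 * b ^ 2) • (X k 0 * X k 0 * X k 2) + ((q ^ 2 + q) * b) • (X k 0 * X k 2 * X k 0))

/-- The algebra `𝒜(b,q)`. -/
abbrev AlgA (b q : k) := RingQuot (relA k b q)

/-- The images of the generators `x₁, x₂, x₃` in `𝒜(b,q)`. -/
abbrev genA (b q : k) (i : Fin 3) : AlgA k b q := RingQuot.mkAlgHom k (relA k b q) (X k i)

/-! With `y = x₃x₁ - q²b x₁x₃`, the relations give `y x₁ = qb x₁ y` (from the fourth),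
`y x₂ = qb x₂ y` (from the first, second and fourth) and `x₃ y = qb y x₃` (from the third).
So `y` skew-commutes, up to nonzero scalars, with every generator, and the elements `a` with
`ya ∈ Ay` and `ay ∈ yA` form a subalgebra containing the generators. -/

theorem isNormalElem_of_mul_eq_smul_mul {K A ι : Type*} [Field K] [Ring A] [Algebra K A]
    {g : ι → A} (hg : Algebra.adjoin K (Set.range g) = ⊤) {y : A} {c : ι → K}
    (hc : ∀ i, c i ≠ 0) (hy : ∀ i, y * g i = c i • (g i * y)) : IsNormalElem y := by
  suffices h : ∀ a, (∃ b, y * a = b * y) ∧ ∃ b, a * y = y * b from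
    ⟨fun a ↦ (h a).1, fun a ↦ (h a).2⟩
  intro a
  induction (hg ▸ Algebra.mem_top : a ∈ Algebra.adjoin K (Set.range g)) using
    Algebra.adjoin_induction with
  | mem _ hx =>
    obtain ⟨i, rfl⟩ := hx
    refine ⟨⟨c i • g i, by rw [hy, smul_mul_assoc]⟩, ⟨(c i)⁻¹ • g i, ?_⟩⟩
    rw [mul_smul_comm, hy, inv_smul_smul₀ (hc i)]
  | algebraMap r =>
    exact ⟨⟨algebraMap K A r, (Algebra.commutes r y).symm⟩,
      ⟨algebraMap K A r, Algebra.commutes r y⟩⟩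
  | add u v _ _ hu hv =>
    obtain ⟨⟨c, hc⟩, ⟨c', hc'⟩⟩ := hu
    obtain ⟨⟨d, hd⟩, ⟨d', hd'⟩⟩ := hv
    exact ⟨⟨c + d, by rw [mul_add, hc, hd, add_mul]⟩,
      ⟨c' + d', by rw [add_mul, hc', hd', mul_add]⟩⟩
  | mul u v _ _ hu hv =>
    obtain ⟨⟨c, hc⟩, ⟨c', hc'⟩⟩ := hu
    obtain ⟨⟨d, hd⟩, ⟨d', hd'⟩⟩ := hv
    refine ⟨⟨c * d, ?_⟩, ⟨c' * d', ?_⟩⟩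
    · rw [← mul_assoc, hc, mul_assoc, hd, ← mul_assoc]
    · rw [mul_assoc, hd', ← mul_assoc, hc', mul_assoc]

theorem adjoin_range_genA (b q : k) : Algebra.adjoin k (Set.range (genA k b q)) = ⊤ := by
  rw [show genA k b q = RingQuot.mkAlgHom k (relA k b q) ∘ ι k from rfl, Set.range_comp,
    ← AlgHom.map_adjoin, adjoin_range_ι, Algebra.map_top, AlgHom.range_eq_top]
  exact RingQuot.mkAlgHom_surjective k (relA k b q)

section Relations

variable {k} (b q : k)

local notation "x₀" => genA k b q 0
local notation "x₁" => genA k b q 1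
local notation "x₂" => genA k b q 2

theorem genA_one_mul_genA_zero : x₁ * x₀ = q⁻¹ • (x₀ * x₁) := by
  simpa only [map_mul, map_smul, map_add] using
    RingQuot.mkAlgHom_rel k (relA.r1 (b := b) (q := q))

theorem genA_two_mul_genA_one :
    x₂ * x₁ = -(q ^ 2 * b)⁻¹ • (x₂ * x₀) + x₀ * x₂ + b • (x₁ * x₂) := by
  simpa only [map_mul, map_smul, map_add] using
    RingQuot.mkAlgHom_rel k (relA.r2 (b := b) (q := q))

theorem genA_two_mul_genA_two_mul_genA_zero :
    x₂ * x₂ * x₀ = -(q ^ 3 * b ^ 2) • (x₀ * (x₂ * x₂)) + ((q ^ 2 + q) * b) • (x₂ * x₀ * x₂) := by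
  simpa only [map_mul, map_smul, map_add] using
    RingQuot.mkAlgHom_rel k (relA.r3 (b := b) (q := q))

theorem genA_two_mul_genA_zero_mul_genA_zero :
    x₂ * (x₀ * x₀) = -(q ^ 3 * b ^ 2) • (x₀ * x₀ * x₂) + ((q ^ 2 + q) * b) • (x₀ * x₂ * x₀) := by
  simpa only [map_mul, map_smul, map_add] using
    RingQuot.mkAlgHom_rel k (relA.r4 (b := b) (q := q))

def normalElemA : AlgA k b q := x₂ * x₀ - (q ^ 2 * b) • (x₀ * x₂)

theorem normalElemA_mul_genA_zero :
    normalElemA b q * x₀ = (q * b) • (x₀ * normalElemA b q) := by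
  rw [normalElemA, sub_mul, mul_assoc, genA_two_mul_genA_zero_mul_genA_zero]
  simp only [smul_mul_assoc, mul_smul_comm, mul_sub, smul_sub, mul_assoc]
  module

theorem genA_two_mul_normalElemA :
    x₂ * normalElemA b q = (q * b) • (normalElemA b q * x₂) := by
  rw [normalElemA, mul_sub, ← mul_assoc, genA_two_mul_genA_two_mul_genA_zero]
  simp only [smul_mul_assoc, mul_smul_comm, sub_mul, smul_sub, mul_assoc]
  module

theorem genA_zero_mul_genA_one (hq : q ≠ 0) : x₀ * x₁ = q • (x₁ * x₀) := by
  rw [genA_one_mul_genA_zero, smul_smul, mul_inv_cancel₀ hq, one_smul]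

theorem normalElemA_mul_genA_one (hq : q ≠ 0) (hb : b ≠ 0) :
    normalElemA b q * x₁ = (q * b) • (x₁ * normalElemA b q) := by
  have hx₀₁ := genA_zero_mul_genA_one b q hq
  have hx₂₁ := genA_two_mul_genA_one b q
  have hx₂₀₀ := genA_two_mul_genA_zero_mul_genA_zero b q
  have expand : normalElemA b q * x₁ = q • (x₂ * x₁ * x₀) - (q ^ 2 * b) • (x₀ * (x₂ * x₁)) := by
    rw [normalElemA, sub_mul, smul_mul_assoc, mul_assoc x₂, hx₀₁, mul_smul_comm, ← mul_assoc,
      mul_assoc x₀]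
  rw [expand, hx₂₁, mul_add, mul_add, mul_smul_comm b x₀, ← mul_assoc x₀ x₁, hx₀₁,
    add_mul, add_mul, smul_mul_assoc _ (x₂ * x₀) x₀, mul_assoc x₂ x₀ x₀, hx₂₀₀, normalElemA]
  simp only [smul_mul_assoc, mul_smul_comm, mul_add, smul_add, mul_sub, smul_sub, add_mul,
    mul_assoc, smul_smul]
  match_scalars <;> field_simp <;> ring

theorem normalElemA_mul_genA_two (hq : q ≠ 0) (hb : b ≠ 0) :
    normalElemA b q * x₂ = (q * b)⁻¹ • (x₂ * normalElemA b q) := by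
  rw [genA_two_mul_normalElemA, inv_smul_smul₀ (mul_ne_zero hq hb)]

end Relations

theorem normal_elem_in_A (b q : k) (hq0 : q ≠ 0) (hb : b ≠ 0) :
    IsNormalElem (genA k b q 2 * genA k b q 0 - (q ^ 2 * b) • (genA k b q 0 * genA k b q 2)) := by
  refine isNormalElem_of_mul_eq_smul_mul (adjoin_range_genA k b q) (y := normalElemA b q)
    (c := ![q * b, q * b, (q * b)⁻¹]) (by simp [Fin.forall_fin_succ, hq0, hb]) fun i ↦ ?_
  fin_cases i
  · exact normalElemA_mul_genA_zero b q
  · exact normalElemA_mul_genA_one b q hq0 hb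
  · exact normalElemA_mul_genA_two b q hq0 hb
end
end

section
/- For q ∈ k with q ≠ 0, 1 and b ∈ k^×, there is a graded k-algebra isomorphism σ: A(b,q) → A(q^2 b, q^{-1}) determined by σ(x_1) = b x_2, σ(x_2) = q^{-2}b^{-1} x_1, σ(x_3) = x_3, where A(b,q) is the algebra of family 𝒜 with parameters b, q. -/
/-!
On generators, `σ` sends `(x₁, x₂, x₃)` to `(b x₂, q⁻²b⁻¹ x₁, x₃)`. Under this substitution the two
quadratic relations of `𝒜(b,q)` become, after rescaling and solving for another monomial, the
quadratic relations of `𝒜(q²b,q⁻¹)`, while the two cubic relations become the analogous cubic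
relations in `x₃, x₂`, which are consequences of the defining relations (`cubic_two_two_one`,
`cubic_two_one_one`). Since `(b, q) ↦ (q²b, q⁻¹)` is an involution, the same substitution in the
other direction gives the inverse.
-/

noncomputable section

open FreeAlgebra

variable (k : Type) [Field k]

section Relations

variable {k} {A : Type*} [Ring A] [Algebra k A]

structure SatisfiesRelA (b q : k) (y : Fin 3 → A) : Prop where
  r1 : y 1 * y 0 = q⁻¹ • (y 0 * y 1)
  r2 : y 2 * y 1 = -(q ^ 2 * b)⁻¹ • (y 2 * y 0) + y 0 * y 2 + b • (y 1 * y 2)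
  r3 : y 2 * y 2 * y 0 =
    -(q ^ 3 * b ^ 2) • (y 0 * (y 2 * y 2)) + ((q ^ 2 + q) * b) • (y 2 * y 0 * y 2)
  r4 : y 2 * (y 0 * y 0) =
    -(q ^ 3 * b ^ 2) • (y 0 * y 0 * y 2) + ((q ^ 2 + q) * b) • (y 0 * y 2 * y 0)

namespace SatisfiesRelA

variable {b q : k} {y : Fin 3 → A}

theorem lift_eq_of_relA (h : SatisfiesRelA b q y) {u v : FreeAlgebra k (Fin 3)}
    (huv : relA k b q u v) : FreeAlgebra.lift k y u = FreeAlgebra.lift k y v := by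
  induction huv <;> simp only [map_mul, map_add, map_smul, FreeAlgebra.lift_ι_apply]
  exacts [h.r1, h.r2, h.r3, h.r4]

def liftAlgHom (h : SatisfiesRelA b q y) : AlgA k b q →ₐ[k] A :=
  RingQuot.liftAlgHom k ⟨FreeAlgebra.lift k y, fun _ _ ↦ h.lift_eq_of_relA⟩

@[simp]
theorem liftAlgHom_genA (h : SatisfiesRelA b q y) (i : Fin 3) :
    h.liftAlgHom (genA k b q i) = y i := by
  simp [liftAlgHom]

theorem cubic_two_two_one (hq : q ≠ 0) (hb : b ≠ 0) (h : SatisfiesRelA b q y) :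
    y 2 * y 2 * y 1 =
      -(q * b ^ 2) • (y 1 * (y 2 * y 2)) + ((1 + q) * b) • (y 2 * y 1 * y 2) := by
  have left := congrArg (y 2 * ·) h.r2
  have right := congrArg (· * y 2) h.r2
  have r3 := h.r3
  -- right-associate all monomials so that `match_scalars` sees equal monomials as equal atoms
  simp only [mul_add, add_mul, mul_smul_comm, smul_mul_assoc, mul_assoc] at left right r3 ⊢
  linear_combination (norm := skip) left - (q ^ 2 * b)⁻¹ • r3 - (q * b) • right
  match_scalars <;> field_simp <;> ring

theorem cubic_two_one_one (hq : q ≠ 0) (hb : b ≠ 0) (h : SatisfiesRelA b q y) :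
    y 2 * (y 1 * y 1) =
      -(q * b ^ 2) • (y 1 * y 1 * y 2) + ((1 + q) * b) • (y 1 * y 2 * y 1) := by
  have r2_y1 := congrArg (· * y 1) h.r2
  have r2_y0 := congrArg (· * y 0) h.r2
  have y0_r2 := congrArg (y 0 * ·) h.r2
  have y1_r2 := congrArg (y 1 * ·) h.r2
  have y2_r1 := congrArg (y 2 * ·) h.r1
  have r1_y2 := congrArg (· * y 2) h.r1
  have r4 := h.r4
  simp only [mul_add, add_mul, mul_smul_comm, smul_mul_assoc, mul_assoc]
    at r2_y1 r2_y0 y0_r2 y1_r2 y2_r1 r1_y2 r4 ⊢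
  linear_combination (norm := skip)
    r2_y1 + (q ^ 2 * b)⁻¹ • (q • y2_r1) - (q ^ 2 * b)⁻¹ • (q • r2_y0)
      + ((q ^ 2 * b)⁻¹ ^ 2 * q) • r4 + y0_r2 - (b * q) • r1_y2 - (q * b) • y1_r2
  match_scalars <;> field_simp <;> ring

theorem swap (hq : q ≠ 0) (hb : b ≠ 0) (h : SatisfiesRelA b q y) :
    SatisfiesRelA (q ^ 2 * b) q⁻¹ ![(q ^ 2 * b) • y 1, b⁻¹ • y 0, y 2] := by
  constructor <;>
    simp only [Matrix.cons_val, Matrix.cons_val_one, Matrix.cons_val_zero, smul_mul_assoc,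
      mul_smul_comm]
  · rw [h.r1]
    match_scalars
    field_simp
  · rw [h.r2]
    match_scalars <;> field_simp <;> ring
  · rw [h.cubic_two_two_one hq hb]
    match_scalars <;> field_simp
  · rw [h.cubic_two_one_one hq hb]
    match_scalars <;> field_simp

end SatisfiesRelA

theorem satisfiesRelA_genA (b q : k) : SatisfiesRelA b q (genA k b q) where
  r1 := by
    simpa only [map_mul, map_add, map_smul] using
      RingQuot.mkAlgHom_rel k (relA.r1 (b := b) (q := q))
  r2 := by
    simpa only [map_mul, map_add, map_smul] using
      RingQuot.mkAlgHom_rel k (relA.r2 (b := b) (q := q))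
  r3 := by
    simpa only [map_mul, map_add, map_smul] using
      RingQuot.mkAlgHom_rel k (relA.r3 (b := b) (q := q))
  r4 := by
    simpa only [map_mul, map_add, map_smul] using
      RingQuot.mkAlgHom_rel k (relA.r4 (b := b) (q := q))

theorem AlgA.algHom_ext {b q : k} {f g : AlgA k b q →ₐ[k] A}
    (h : ∀ i, f (genA k b q i) = g (genA k b q i)) : f = g :=
  RingQuot.ringQuot_ext' _ _ _ (FreeAlgebra.hom_ext (funext h))

end Relations

theorem iso_A_to_A (b q : k) (hq0 : q ≠ 0) (hb : b ≠ 0) :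
    ∃ σ : AlgA k b q ≃ₐ[k] AlgA k (q ^ 2 * b) q⁻¹,
      σ (genA k b q 0) = b • genA k (q ^ 2 * b) q⁻¹ 1 ∧
      σ (genA k b q 1) = ((q ^ 2)⁻¹ * b⁻¹) • genA k (q ^ 2 * b) q⁻¹ 0 ∧
      σ (genA k b q 2) = genA k (q ^ 2 * b) q⁻¹ 2 := by
  have hσ : SatisfiesRelA b q ![b • genA k (q ^ 2 * b) q⁻¹ 1,
      ((q ^ 2)⁻¹ * b⁻¹) • genA k (q ^ 2 * b) q⁻¹ 0, genA k (q ^ 2 * b) q⁻¹ 2] := by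
    have h := (satisfiesRelA_genA (q ^ 2 * b) q⁻¹).swap (inv_ne_zero hq0) (by positivity)
    rwa [show q⁻¹ ^ 2 * (q ^ 2 * b) = b by field_simp, inv_inv, mul_inv] at h
  have hτ := (satisfiesRelA_genA b q).swap hq0 hb
  refine ⟨AlgEquiv.ofAlgHom hσ.liftAlgHom hτ.liftAlgHom ?_ ?_, ?_, ?_, ?_⟩
  iterate 2
    refine AlgA.algHom_ext fun i ↦ ?_
    fin_cases i <;> simp [smul_smul] <;> match_scalars <;> field_simp
  all_goals simp
end
end

section
/- For q ∈ k with q ≠ 0, 1 and b ∈ k^×, the opposite algebra of A(b,q) is isomorphic as a graded algebra to A(1/b, 1/q), where A(b,q) is the algebra of family 𝒜 with parameters b, q. -/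
/-! Sending `x₁ ↦ q²b² y₁`, `x₂ ↦ y₂`, `x₃ ↦ y₃` respects the relations of `𝒜(b,q)` read backwards in
`𝒜(b⁻¹,q⁻¹)`, so it defines an anti-homomorphism `𝒜(b,q) → 𝒜(b⁻¹,q⁻¹)`. The same recipe in the
other direction rescales `y₁` by `q⁻²b⁻²`, so the two anti-homomorphisms are mutually inverse on
generators, hence everywhere. -/

noncomputable section

open FreeAlgebra

variable (k : Type) [Field k]

namespace AlgA

open MulOpposite

variable {k} {b q : k}

theorem genA_r1 : genA k b q 1 * genA k b q 0 = q⁻¹ • (genA k b q 0 * genA k b q 1) := by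
  simpa only [map_mul, map_smul] using
    RingQuot.mkAlgHom_rel k (relA.r1 (q := q) (b := b))

theorem genA_r2 : genA k b q 2 * genA k b q 1 =
    -(q ^ 2 * b)⁻¹ • (genA k b q 2 * genA k b q 0) + genA k b q 0 * genA k b q 2
      + b • (genA k b q 1 * genA k b q 2) := by
  simpa only [map_mul, map_smul, map_add] using
    RingQuot.mkAlgHom_rel k (relA.r2 (q := q) (b := b))

theorem genA_r3 : genA k b q 2 * genA k b q 2 * genA k b q 0 =
    -(q ^ 3 * b ^ 2) • (genA k b q 0 * (genA k b q 2 * genA k b q 2))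
      + ((q ^ 2 + q) * b) • (genA k b q 2 * genA k b q 0 * genA k b q 2) := by
  simpa only [map_mul, map_smul, map_add] using
    RingQuot.mkAlgHom_rel k (relA.r3 (q := q) (b := b))

theorem genA_r4 : genA k b q 2 * (genA k b q 0 * genA k b q 0) =
    -(q ^ 3 * b ^ 2) • (genA k b q 0 * genA k b q 0 * genA k b q 2)
      + ((q ^ 2 + q) * b) • (genA k b q 0 * genA k b q 2 * genA k b q 0) := by
  simpa only [map_mul, map_smul, map_add] using
    RingQuot.mkAlgHom_rel k (relA.r4 (q := q) (b := b))

theorem algHom_ext_s8 {B : Type*} [Semiring B] [Algebra k B] {f g : AlgA k b q →ₐ[k] B}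
    (h : ∀ i, f (genA k b q i) = g (genA k b q i)) : f = g :=
  RingQuot.ringQuot_ext' k f g (FreeAlgebra.hom_ext (funext h))

theorem opAlgHom_ext {B : Type*} [Semiring B] [Algebra k B] {f g : (AlgA k b q)ᵐᵒᵖ →ₐ[k] B}
    (h : ∀ i, f (op (genA k b q i)) = g (op (genA k b q i))) : f = g :=
  AlgHom.opComm.symm.injective (algHom_ext_s8 fun i => congrArg op (h i))

/-- The rescaling `x₁ ↦ q²b² y₁` is what makes the reversed relation `r2` of `𝒜(b,q)` match
the relation `r2` of `𝒜(b⁻¹,q⁻¹)`. -/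
def oppScale (b q : k) : Fin 3 → k := ![q ^ 2 * b ^ 2, 1, 1]

variable {b' q' : k}

theorem oppScale_mul_oppScale (hb : b * b' = 1) (hq : q * q' = 1) (i : Fin 3) :
    oppScale b q i * oppScale b' q' i = 1 := by
  fin_cases i
  · show q ^ 2 * b ^ 2 * (q' ^ 2 * b' ^ 2) = 1
    rw [show q ^ 2 * b ^ 2 * (q' ^ 2 * b' ^ 2) = (q * q') ^ 2 * (b * b') ^ 2 by ring, hb, hq]
    norm_num
  all_goals exact one_mul 1

theorem lift_oppScale_eq_of_relA (hb : b * b' = 1) (hq : q * q' = 1) ⦃x y⦄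
    (h : relA k b q x y) :
    FreeAlgebra.lift k (fun i => op (oppScale b q i • genA k b' q' i)) x =
      FreeAlgebra.lift k (fun i => op (oppScale b q i • genA k b' q' i)) y := by
  obtain rfl := inv_eq_of_mul_eq_one_right hb
  obtain rfl := inv_eq_of_mul_eq_one_right hq
  have hb0 := left_ne_zero_of_mul_eq_one hb
  have hq0 := left_ne_zero_of_mul_eq_one hq
  apply unop_injective
  induction h <;>
    simp only [X, map_mul, map_smul, map_add, FreeAlgebra.lift_ι_apply, oppScale,
      Matrix.cons_val_zero, Matrix.cons_val_one, Matrix.head_cons, Fin.isValue,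
      Matrix.cons_val_two, Matrix.tail_cons, unop_mul, unop_smul, unop_add, unop_op, one_smul,
      smul_mul_assoc, mul_smul_comm] <;>
    (first | rw [genA_r1] | rw [genA_r2] | rw [genA_r3] | rw [genA_r4]) <;>
    (try simp only [mul_assoc]) <;> match_scalars <;> field_simp <;> ring

def toOpp (hb : b * b' = 1) (hq : q * q' = 1) : AlgA k b q →ₐ[k] (AlgA k b' q')ᵐᵒᵖ :=
  RingQuot.liftAlgHom k
    ⟨FreeAlgebra.lift k fun i => op (oppScale b q i • genA k b' q' i),
      lift_oppScale_eq_of_relA hb hq⟩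

@[simp]
theorem toOpp_genA (hb : b * b' = 1) (hq : q * q' = 1) (i : Fin 3) :
    toOpp hb hq (genA k b q i) = op (oppScale b q i • genA k b' q' i) := by
  simp [toOpp]

def oppEquiv (hb : b * b' = 1) (hq : q * q' = 1) : (AlgA k b q)ᵐᵒᵖ ≃ₐ[k] AlgA k b' q' :=
  AlgEquiv.ofAlgHom (AlgHom.opComm (toOpp hb hq))
    (toOpp ((mul_comm b' b).trans hb) ((mul_comm q' q).trans hq))
    (algHom_ext_s8 fun i => by
      simp [smul_smul, mul_comm (oppScale b' q' i), oppScale_mul_oppScale hb hq])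
    (opAlgHom_ext fun i => by simp [smul_smul, oppScale_mul_oppScale hb hq])

theorem oppEquiv_op_genA (hb : b * b' = 1) (hq : q * q' = 1) (i : Fin 3) :
    oppEquiv hb hq (op (genA k b q i)) = oppScale b q i • genA k b' q' i := by
  simp [oppEquiv]

end AlgA

/-- Gradedness of the isomorphism is expressed by requiring that the generators, which span the
degree-one part, are mapped into the span of the generators. -/
theorem opposite_A (b q : k) (hq0 : q ≠ 0) (hb : b ≠ 0) :
    ∃ e : (AlgA k b q)ᵐᵒᵖ ≃ₐ[k] AlgA k b⁻¹ q⁻¹,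
      ∀ i : Fin 3, e (MulOpposite.op (genA k b q i)) ∈
        Submodule.span k {genA k b⁻¹ q⁻¹ 0, genA k b⁻¹ q⁻¹ 1, genA k b⁻¹ q⁻¹ 2} := by
  refine ⟨AlgA.oppEquiv (mul_inv_cancel₀ hb) (mul_inv_cancel₀ hq0), fun i => ?_⟩
  rw [AlgA.oppEquiv_op_genA]
  refine Submodule.smul_mem _ _ (Submodule.subset_span ?_)
  fin_cases i <;> simp
end
end

section
/- For b ∈ k^×, the element y := x_3x_1 - b^2 x_2x_3 is a normal element of the algebra ℬ(b) = k⟨x_1,x_2,x_3⟩/(x_2x_1 + x_1x_2, x_3x_2 + b^{-1}x_3x_1 - x_1x_3 - b x_2x_3, x_3^2x_1 - b^2 x_1x_3^2, x_3x_1^2 + b^3 x_1x_2x_3 - b x_1x_3x_1 - b^2 x_2x_3x_1). -/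
noncomputable section

open FreeAlgebra

variable (k : Type) [Field k]

inductive relB (b : k) : FreeAlgebra k (Fin 3) → FreeAlgebra k (Fin 3) → Prop
  | r1 : relB b (X k 1 * X k 0)
      (-(X k 0 * X k 1))
  | r2 : relB b (X k 2 * X k 1)
      (-b⁻¹ • (X k 2 * X k 0) + X k 0 * X k 2 + b • (X k 1 * X k 2))
  | r3 : relB b (X k 2 * X k 2 * X k 0)
      (b ^ 2 • (X k 0 * (X k 2 * X k 2)))
  | r4 : relB b (X k 2 * (X k 0 * X k 0))
      (-(b ^ 3) • (X k 0 * X k 1 * X k 2) + b • (X k 0 * X k 2 * X k 0) + b ^ 2 • (X k 1 * X k 2 * X k 0))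

/-- The algebra `ℬ(b)`. -/
abbrev AlgB (b : k) := RingQuot (relB k b)

/-- The images of the generators in `ℬ(b)`. -/
abbrev genB (b : k) (i : Fin 3) : AlgB k b := RingQuot.mkAlgHom k (relB k b) (X k i)

/-! The element `y` skew-commutes with the generators: `y x₁ = b x₁ y`, `y x₂ = b x₂ y` and
`x₃ y = b y x₃`, each being a short combination of the defining relations. The elements `a` with
`y a ∈ A y` and `a y ∈ y A` form a subalgebra, which contains the generators because `b ≠ 0`,
so it is all of `ℬ(b)`.

Generators are indexed from `0`: `genB k b i` is `x_{i+1}`. -/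

def Normalizes {A : Type*} [Mul A] (y a : A) : Prop :=
  (∃ c, y * a = c * y) ∧ ∃ c, a * y = y * c

theorem Normalizes.mul {A : Type*} [Semigroup A] {y a a' : A} (ha : Normalizes y a)
    (ha' : Normalizes y a') : Normalizes y (a * a') := by
  obtain ⟨⟨c, hc⟩, ⟨d, hd⟩⟩ := ha
  obtain ⟨⟨c', hc'⟩, ⟨d', hd'⟩⟩ := ha'
  exact ⟨⟨c * c', by rw [← mul_assoc, hc, mul_assoc, hc', mul_assoc]⟩,
    ⟨d * d', by rw [mul_assoc, hd', ← mul_assoc, hd, mul_assoc]⟩⟩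

theorem Normalizes.add {A : Type*} [Distrib A] {y a a' : A} (ha : Normalizes y a)
    (ha' : Normalizes y a') : Normalizes y (a + a') := by
  obtain ⟨⟨c, hc⟩, ⟨d, hd⟩⟩ := ha
  obtain ⟨⟨c', hc'⟩, ⟨d', hd'⟩⟩ := ha'
  exact ⟨⟨c + c', by rw [mul_add, hc, hc', add_mul]⟩,
    ⟨d + d', by rw [add_mul, hd, hd', mul_add]⟩⟩

theorem normalizes_algebraMap {R A : Type*} [CommSemiring R] [Semiring A] [Algebra R A]
    (y : A) (r : R) : Normalizes y (algebraMap R A r) :=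
  ⟨⟨_, (Algebra.commutes r y).symm⟩, ⟨_, Algebra.commutes r y⟩⟩

theorem normalizes_of_mul_eq_smul {K A : Type*} [Field K] [Semiring A] [Algebra K A] {y a : A}
    {q : K} (hq : q ≠ 0) (h : y * a = q • (a * y)) : Normalizes y a :=
  ⟨⟨q • a, by rw [h, smul_mul_assoc]⟩,
    ⟨q⁻¹ • a, by rw [mul_smul_comm, h, smul_smul, inv_mul_cancel₀ hq, one_smul]⟩⟩

theorem isNormalElem_of_adjoin_eq_top_s10 {R A : Type*} [CommSemiring R] [Semiring A]
    [Algebra R A] {y : A} {S : Set A} (hS : Algebra.adjoin R S = ⊤)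
    (h : ∀ s ∈ S, Normalizes y s) : IsNormalElem y := by
  have key (a : A) : Normalizes y a := by
    have ha : a ∈ Algebra.adjoin R S := hS ▸ Algebra.mem_top
    induction ha using Algebra.adjoin_induction with
    | mem s hs => exact h s hs
    | algebraMap r => exact normalizes_algebraMap y r
    | add a a' _ _ ha ha' => exact ha.add ha'
    | mul a a' _ _ ha ha' => exact ha.mul ha'
  exact ⟨fun a => (key a).1, fun a => (key a).2⟩

theorem adjoin_range_genB (b : k) : Algebra.adjoin k (Set.range (genB k b)) = ⊤ := by
  change Algebra.adjoin k (Set.range (RingQuot.mkAlgHom k (relB k b) ∘ FreeAlgebra.ι k)) = ⊤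
  rw [Set.range_comp, Algebra.adjoin_image, FreeAlgebra.adjoin_range_ι, Algebra.map_top,
    AlgHom.range_eq_top]
  exact RingQuot.mkAlgHom_surjective k _

section

variable {k} (b : k)

def yB : AlgB k b := genB k b 2 * genB k b 0 - b ^ 2 • (genB k b 1 * genB k b 2)

theorem genB_one_mul_zero_add : genB k b 1 * genB k b 0 + genB k b 0 * genB k b 1 = 0 := by
  have h := RingQuot.mkAlgHom_rel k (relB.r1 (b := b))
  simp only [map_mul, map_neg] at h
  rw [h, neg_add_cancel]

theorem smul_genB_two_mul_one (hb : b ≠ 0) :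
    b • (genB k b 2 * genB k b 1) + genB k b 2 * genB k b 0 =
      b • (genB k b 0 * genB k b 2) + b ^ 2 • (genB k b 1 * genB k b 2) := by
  have h := RingQuot.mkAlgHom_rel k (relB.r2 (b := b))
  simp only [map_mul, map_add, map_smul] at h
  rw [h, smul_add, smul_add, smul_smul, mul_neg, mul_inv_cancel₀ hb, neg_smul, one_smul]
  module

theorem genB_two_mul_two_mul_zero :
    genB k b 2 * genB k b 2 * genB k b 0 = b ^ 2 • (genB k b 0 * (genB k b 2 * genB k b 2)) := by
  simpa only [map_mul, map_smul] using RingQuot.mkAlgHom_rel k (relB.r3 (b := b))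

theorem genB_two_mul_zero_mul_zero :
    genB k b 2 * (genB k b 0 * genB k b 0) =
      -(b ^ 3) • (genB k b 0 * genB k b 1 * genB k b 2) +
        b • (genB k b 0 * genB k b 2 * genB k b 0) +
        b ^ 2 • (genB k b 1 * genB k b 2 * genB k b 0) := by
  simpa only [map_mul, map_neg, map_add, map_smul] using RingQuot.mkAlgHom_rel k (relB.r4 (b := b))

theorem yB_mul_genB_zero : yB b * genB k b 0 = b • (genB k b 0 * yB b) := by
  linear_combination (norm := skip) genB_two_mul_zero_mul_zero b
  simp only [yB, sub_mul, mul_sub, smul_mul_assoc, mul_smul_comm, mul_assoc]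
  module

theorem genB_two_mul_yB (hb : b ≠ 0) : genB k b 2 * yB b = b • (yB b * genB k b 2) := by
  linear_combination (norm := skip)
    genB_two_mul_two_mul_zero b - b • (smul_genB_two_mul_one b hb * genB k b 2)
  simp only [yB, sub_mul, mul_sub, add_mul, smul_mul_assoc, mul_smul_comm, mul_assoc]
  module

theorem yB_mul_genB_one (hb : b ≠ 0) : yB b * genB k b 1 = b • (genB k b 1 * yB b) := by
  -- the relations only give `b` times this identity
  refine smul_right_injective _ hb ?_
  linear_combination (norm := skip)
    b • (genB k b 2 * genB_one_mul_zero_add b) - smul_genB_two_mul_one b hb * genB k b 0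
      + genB_two_mul_zero_mul_zero b - b ^ 2 • (genB k b 1 * smul_genB_two_mul_one b hb)
      - b ^ 3 • (genB_one_mul_zero_add b * genB k b 2)
  simp only [yB, sub_mul, mul_sub, add_mul, mul_add, smul_mul_assoc, mul_smul_comm, mul_assoc,
    mul_zero, zero_mul]
  module

end

/-- for `b ≠ 0`, the element `y = x₃x₁ - b² x₂x₃` is normal in `ℬ(b)`. -/
theorem normal_elem_in_B (b : k) (hb : b ≠ 0) :
    IsNormalElem (genB k b 2 * genB k b 0 - b ^ 2 • (genB k b 1 * genB k b 2)) := by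
  refine isNormalElem_of_adjoin_eq_top_s10 (adjoin_range_genB k b) ?_
  rintro _ ⟨i, rfl⟩
  fin_cases i
  · exact normalizes_of_mul_eq_smul hb (yB_mul_genB_zero b)
  · exact normalizes_of_mul_eq_smul hb (yB_mul_genB_one b hb)
  · exact normalizes_of_mul_eq_smul (inv_ne_zero hb)
      ((eq_inv_smul_iff₀ hb).mpr (genB_two_mul_yB b hb).symm)
end
end

section
/- For b ∈ k^×, the element y := x_3x_1 - b x_1x_3 is a normal element of the algebra 𝒞(b) = k⟨x_1,x_2,x_3⟩/(x_2x_1 + x_1x_2, x_3x_2 + b^{-1}x_3x_1 - x_1x_3 - b x_2x_3, x_3^2x_1 - b^2 x_1x_3^2, x_3x_1^2 - b^3 x_1x_2x_3 - b x_1x_3x_1 - b^2 x_2x_3x_1). -/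
noncomputable section

open FreeAlgebra

variable (k : Type) [Field k]

inductive relC (b : k) : FreeAlgebra k (Fin 3) → FreeAlgebra k (Fin 3) → Prop
  | r1 : relC b (X k 1 * X k 0)
      (-(X k 0 * X k 1))
  | r2 : relC b (X k 2 * X k 1)
      (-b⁻¹ • (X k 2 * X k 0) + X k 0 * X k 2 + b • (X k 1 * X k 2))
  | r3 : relC b (X k 2 * X k 2 * X k 0)
      (b ^ 2 • (X k 0 * (X k 2 * X k 2)))
  | r4 : relC b (X k 2 * (X k 0 * X k 0))
      (b ^ 3 • (X k 0 * X k 1 * X k 2) + b • (X k 0 * X k 2 * X k 0) + b ^ 2 • (X k 1 * X k 2 * X k 0))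

/-- The algebra `𝒞(b)`. -/
abbrev AlgC (b : k) := RingQuot (relC k b)

/-- The images of the generators in `𝒞(b)`. -/
abbrev genC (b : k) (i : Fin 3) : AlgC k b := RingQuot.mkAlgHom k (relC k b) (X k i)

/-!
Left multiplication by `y` twists the generators by scalar multiples of a permutation:
`y x₁ = b² x₂ y`, `y x₂ = x₁ y`, `y x₃ = -b⁻¹ x₃ y`, each a short computation from the defining
relations (the second one through `x₃x₁x₂ = b² x₁x₂x₃`). As `b ≠ 0` these can be solved for
`xᵢ y ∈ y 𝒞(b)` as well, and the elements `a` with `y a ∈ 𝒞(b) y` (resp. `a y ∈ y 𝒞(b)`) form a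
subalgebra, which therefore is everything.
-/

section

variable {R A : Type*} [CommSemiring R] [Semiring A] [Algebra R A]

theorem IsNormalElem.of_adjoin_range_eq_top {ι : Type*} {x : ι → A}
    (hx : Algebra.adjoin R (Set.range x) = ⊤) {y : A}
    (hleft : ∀ i, ∃ c, y * x i = c * y) (hright : ∀ i, ∃ c, x i * y = y * c) :
    IsNormalElem y := by
  have hmem (a : A) : a ∈ Algebra.adjoin R (Set.range x) := hx ▸ Algebra.mem_top
  refine ⟨fun a ↦ ?_, fun a ↦ ?_⟩
  · induction hmem a using Algebra.adjoin_induction with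
    | mem _ hs => obtain ⟨i, rfl⟩ := hs; exact hleft i
    | algebraMap r => exact ⟨algebraMap R A r, (Algebra.commutes r y).symm⟩
    | add u v _ _ hu hv =>
      obtain ⟨cu, hcu⟩ := hu
      obtain ⟨cv, hcv⟩ := hv
      exact ⟨cu + cv, by rw [mul_add, hcu, hcv, add_mul]⟩
    | mul u v _ _ hu hv =>
      obtain ⟨cu, hcu⟩ := hu
      obtain ⟨cv, hcv⟩ := hv
      exact ⟨cu * cv, by rw [← mul_assoc, hcu, mul_assoc, hcv, mul_assoc]⟩
  · induction hmem a using Algebra.adjoin_induction with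
    | mem _ hs => obtain ⟨i, rfl⟩ := hs; exact hright i
    | algebraMap r => exact ⟨algebraMap R A r, Algebra.commutes r y⟩
    | add u v _ _ hu hv =>
      obtain ⟨cu, hcu⟩ := hu
      obtain ⟨cv, hcv⟩ := hv
      exact ⟨cu + cv, by rw [add_mul, hcu, hcv, mul_add]⟩
    | mul u v _ _ hu hv =>
      obtain ⟨cu, hcu⟩ := hu
      obtain ⟨cv, hcv⟩ := hv
      exact ⟨cu * cv, by rw [mul_assoc, hcv, ← mul_assoc, hcu, mul_assoc]⟩

end

section

variable {k} {A : Type*} [Ring A] [Algebra k A]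

/-- Equivalently, `x` extends to an algebra map `𝒞(b) → A`. -/
structure SatisfiesRelC (b : k) (x : Fin 3 → A) : Prop where
  rel₁ : x 1 * x 0 = -(x 0 * x 1)
  rel₂ : x 2 * x 1 = -(b⁻¹ • (x 2 * x 0)) + x 0 * x 2 + b • (x 1 * x 2)
  rel₃ : x 2 * x 2 * x 0 = b ^ 2 • (x 0 * (x 2 * x 2))
  rel₄ : x 2 * (x 0 * x 0) =
    b ^ 3 • (x 0 * x 1 * x 2) + b • (x 0 * x 2 * x 0) + b ^ 2 • (x 1 * x 2 * x 0)

/-- `x i` plays the role of the paper's `x_{i+1}`, so this is `y = x₃x₁ - b x₁x₃`. -/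
def normalElemC (b : k) (x : Fin 3 → A) : A := x 2 * x 0 - b • (x 0 * x 2)

namespace SatisfiesRelC

variable {b : k} {x : Fin 3 → A}

theorem normalElemC_mul_zero (h : SatisfiesRelC b x) :
    normalElemC b x * x 0 = (b ^ 2 • x 1) * normalElemC b x := by
  have h₁ : x 1 * (x 0 * x 2) = -(x 0 * (x 1 * x 2)) := by
    rw [← mul_assoc, h.rel₁, neg_mul, mul_assoc]
  have h₄ := h.rel₄
  simp only [mul_assoc] at h₄
  simp only [normalElemC, sub_mul, mul_sub, smul_mul_assoc, mul_smul_comm, smul_smul, mul_assoc,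
    h₄, h₁]
  module

theorem normalElemC_mul_two (h : SatisfiesRelC b x) (hb : b ≠ 0) :
    normalElemC b x * x 2 = (-b⁻¹ • x 2) * normalElemC b x := by
  have h₃ := h.rel₃
  simp only [mul_assoc] at h₃
  simp only [normalElemC, sub_mul, mul_sub, smul_mul_assoc, mul_smul_comm, smul_smul, mul_assoc,
    h₃]
  field_simp
  module

theorem x_two_mul_x_zero_mul_x_one (h : SatisfiesRelC b x) (hb : b ≠ 0) :
    x 2 * (x 0 * x 1) = b ^ 2 • (x 0 * (x 1 * x 2)) := by
  have h₄ := h.rel₄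
  simp only [mul_assoc] at h₄
  rw [← neg_neg (x 0 * x 1), ← h.rel₁, mul_neg, ← mul_assoc, h.rel₂]
  simp only [add_mul, neg_mul, smul_mul_assoc, mul_assoc, h₄]
  match_scalars <;> field_simp <;> ring

theorem normalElemC_mul_one (h : SatisfiesRelC b x) (hb : b ≠ 0) :
    normalElemC b x * x 1 = x 0 * normalElemC b x := by
  simp only [normalElemC, sub_mul, mul_sub, smul_mul_assoc, mul_smul_comm, mul_assoc,
    h.x_two_mul_x_zero_mul_x_one hb, h.rel₂]
  simp only [mul_add, mul_neg, mul_smul_comm, smul_add, smul_smul]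
  match_scalars <;> simp [hb, sq]

theorem mul_normalElemC_zero (h : SatisfiesRelC b x) (hb : b ≠ 0) :
    x 0 * normalElemC b x = normalElemC b x * x 1 :=
  (h.normalElemC_mul_one hb).symm

theorem mul_normalElemC_one (h : SatisfiesRelC b x) (hb : b ≠ 0) :
    x 1 * normalElemC b x = normalElemC b x * ((b ^ 2)⁻¹ • x 0) := by
  rw [mul_smul_comm, h.normalElemC_mul_zero, smul_mul_assoc, smul_smul,
    inv_mul_cancel₀ (pow_ne_zero 2 hb), one_smul]

theorem mul_normalElemC_two (h : SatisfiesRelC b x) (hb : b ≠ 0) :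
    x 2 * normalElemC b x = normalElemC b x * (-b • x 2) := by
  rw [mul_smul_comm, h.normalElemC_mul_two hb, smul_mul_assoc, smul_smul, neg_mul_neg,
    mul_inv_cancel₀ hb, one_smul]

end SatisfiesRelC

end

theorem adjoin_range_genC (b : k) : Algebra.adjoin k (Set.range (genC k b)) = ⊤ := by
  change Algebra.adjoin k (Set.range (RingQuot.mkAlgHom k (relC k b) ∘ FreeAlgebra.ι k)) = ⊤
  rw [Set.range_comp, Algebra.adjoin_image, FreeAlgebra.adjoin_range_ι, Algebra.map_top,
    AlgHom.range_eq_top]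
  exact RingQuot.mkAlgHom_surjective k (relC k b)

theorem satisfiesRelC_genC (b : k) : SatisfiesRelC b (genC k b) where
  rel₁ := by simpa using RingQuot.mkAlgHom_rel k (relC.r1 (b := b))
  rel₂ := by simpa using RingQuot.mkAlgHom_rel k (relC.r2 (b := b))
  rel₃ := by simpa using RingQuot.mkAlgHom_rel k (relC.r3 (b := b))
  rel₄ := by simpa using RingQuot.mkAlgHom_rel k (relC.r4 (b := b))

/-- for `b ≠ 0`, the element `y = x₃x₁ - b x₁x₃` is normal in `𝒞(b)`. -/
theorem normal_elem_in_C (b : k) (hb : b ≠ 0) :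
    IsNormalElem (genC k b 2 * genC k b 0 - b • (genC k b 0 * genC k b 2)) := by
  have h := satisfiesRelC_genC k b
  refine IsNormalElem.of_adjoin_range_eq_top (adjoin_range_genC k b) (fun i ↦ ?_)
    (fun i ↦ ?_) <;> fin_cases i
  · exact ⟨_, h.normalElemC_mul_zero⟩
  · exact ⟨_, h.normalElemC_mul_one hb⟩
  · exact ⟨_, h.normalElemC_mul_two hb⟩
  · exact ⟨_, h.mul_normalElemC_zero hb⟩
  · exact ⟨_, h.mul_normalElemC_one hb⟩
  · exact ⟨_, h.mul_normalElemC_two hb⟩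
end
end

section
/- Let 𝒟 = 𝒟(1,h) = k⟨x_1,x_2,x_3⟩/(x_2x_1 + x_1x_2, x_3x_2 + x_3x_1 - x_1x_3 - x_2x_3, x_3^2x_1 - x_1x_3^2, x_3x_1^2 - (h-1)x_1^2x_3 - h x_2^2x_3) for h ∈ k. Then the elements x_1^2 + x_2^2 and x_3^2 are central in 𝒟. -/
noncomputable section

open FreeAlgebra

variable (k : Type) [Field k]

/-- The defining relations of `𝒟(1,h)`. -/
inductive relD (h : k) : FreeAlgebra k (Fin 3) → FreeAlgebra k (Fin 3) → Prop
  | r1 : relD h (X k 1 * X k 0) (-(X k 0 * X k 1))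
  | r2 : relD h (X k 2 * X k 1) (-(X k 2 * X k 0) + X k 0 * X k 2 + X k 1 * X k 2)
  | r3 : relD h (X k 2 * X k 2 * X k 0) (X k 0 * (X k 2 * X k 2))
  | r4 : relD h (X k 2 * (X k 0 * X k 0))
      ((h - 1) • (X k 0 * X k 0 * X k 2) + h • (X k 1 * (X k 1 * X k 2)))

/-- The algebra `𝒟(1,h)`. -/
abbrev AlgD (h : k) := RingQuot (relD k h)

/-- The images of the generators in `𝒟(1,h)`. -/
abbrev genD (h : k) (i : Fin 3) : AlgD k h := RingQuot.mkAlgHom k (relD k h) (X k i)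

/-! It suffices that each element commutes with the three generators, since these generate the
quotient of the free algebra. Each such commutator is an explicit two-sided linear combination of
the defining relations, found by expanding with `x₂x₁ = -x₁x₂` and
`x₃x₂ = -x₃x₁ + x₁x₃ + x₂x₃`. -/

section AnticommutingGenerators

variable {A : Type*} [Ring A] {a b c : A}

theorem commute_mul_self_of_mul_eq_neg_mul (hba : b * a = -(a * b)) : Commute (b * b) a := by
  rw [commute_iff_eq]
  linear_combination (norm := noncomm_ring) b * hba - hba * b

theorem commute_add_mul_self_left (hba : b * a = -(a * b)) : Commute (a * a + b * b) a :=
  ((Commute.refl a).mul_left (Commute.refl a)).add_left (commute_mul_self_of_mul_eq_neg_mul hba)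

theorem commute_add_mul_self_right (hba : b * a = -(a * b)) : Commute (a * a + b * b) b :=
  (commute_mul_self_of_mul_eq_neg_mul (by rw [hba, neg_neg])).add_left
    ((Commute.refl b).mul_left (Commute.refl b))

theorem commute_add_mul_self_of_mul_eq (hba : b * a = -(a * b))
    (hcb : c * b = -(c * a) + a * c + b * c) : Commute (a * a + b * b) c := by
  rw [commute_iff_eq]
  linear_combination (norm := noncomm_ring) -((a + b) * hcb) - hcb * (a + b) + c * hba - hba * c

theorem commute_mul_self_of_mul_eq (hcb : c * b = -(c * a) + a * c + b * c)
    (hcca : Commute (c * c) a) : Commute (c * c) b := by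
  rw [commute_iff_eq] at hcca ⊢
  linear_combination (norm := noncomm_ring) c * hcb + hcb * c - hcca

end AnticommutingGenerators

theorem RingQuot.commute_of_forall_commute_mkAlgHom_ι {R σ : Type*} [CommSemiring R]
    {s : FreeAlgebra R σ → FreeAlgebra R σ → Prop} {z : RingQuot s}
    (hz : ∀ i, Commute z (mkAlgHom R s (ι R i))) (u : RingQuot s) : Commute z u := by
  refine Algebra.commute_of_mem_adjoin_of_forall_mem_commute (R := R) ?_
    (Set.forall_mem_range.2 hz)
  rw [Set.range_comp', Algebra.adjoin_image, adjoin_range_ι, Algebra.map_top,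
    (AlgHom.range_eq_top _).2 (mkAlgHom_surjective R s)]
  trivial

section Relations

variable {k} (h : k)

theorem genD_one_mul_genD_zero : genD k h 1 * genD k h 0 = -(genD k h 0 * genD k h 1) := by
  simpa using RingQuot.mkAlgHom_rel k (relD.r1 (h := h))

theorem genD_two_mul_genD_one :
    genD k h 2 * genD k h 1 = -(genD k h 2 * genD k h 0) + genD k h 0 * genD k h 2 +
      genD k h 1 * genD k h 2 := by
  simpa using RingQuot.mkAlgHom_rel k (relD.r2 (h := h))

theorem commute_genD_two_mul_self_genD_zero : Commute (genD k h 2 * genD k h 2) (genD k h 0) := by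
  simpa [commute_iff_eq] using RingQuot.mkAlgHom_rel k (relD.r3 (h := h))

end Relations

/-- the elements `x₁² + x₂²` and `x₃²` are central in `𝒟(1,h)`. -/
theorem central_elems_in_D (h : k) :
    (∀ u : AlgD k h,
      (genD k h 0 * genD k h 0 + genD k h 1 * genD k h 1) * u =
        u * (genD k h 0 * genD k h 0 + genD k h 1 * genD k h 1)) ∧
    (∀ u : AlgD k h, (genD k h 2 * genD k h 2) * u = u * (genD k h 2 * genD k h 2)) := by
  have r1 := genD_one_mul_genD_zero h
  have r2 := genD_two_mul_genD_one h
  have r3 := commute_genD_two_mul_self_genD_zero h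
  constructor <;> refine RingQuot.commute_of_forall_commute_mkAlgHom_ι fun i => ?_ <;> fin_cases i
  · exact commute_add_mul_self_left r1
  · exact commute_add_mul_self_right r1
  · exact commute_add_mul_self_of_mul_eq r1 r2
  · exact r3
  · exact commute_mul_self_of_mul_eq r2 r3
  · exact (Commute.refl _).mul_left (Commute.refl _)
end
end

section
/- Let ℱ = ℱ(1,γ) = k⟨x_1,x_2,x_3⟩/(x_2x_1 - γ^2 x_1x_2, x_3x_2 + γ x_3x_1 - x_1x_3 - x_2x_3, x_3^2x_1 - γ^2 x_2x_3^2 + x_3x_1x_3, x_3x_1^2 - γ x_1x_2x_3 - γ^2 x_2x_3x_1), where γ is a primitive cube root of unity. Then x_1^3 + x_2^3, x_3^3, and x_1^2x_2 are normal elements of ℱ. -/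
/-!
Each of the three elements `y` skew-commutes with every generator: `y xᵢ = c xᵢ y` with
`c ∈ {1, γ²}`. Since the generators generate the algebra, this makes `y` normal. The
skew-commutations hold in any algebra with elements satisfying the relations: read from left to
right, the relations (plus their consequence `x₃x₁x₂ = γ x₁x₃x₁ - x₁x₂x₃`) rewrite left-associated
monomials, and both sides of each identity reduce to the same combination once the coefficients
are simplified with `γ² + γ + 1 = 0`.
-/

noncomputable section

open FreeAlgebra

variable (k : Type) [Field k]

/-- The defining relations of `ℱ(b,γ)` (`γ` a primitive cube root of unity). -/
inductive relF (b g : k) : FreeAlgebra k (Fin 3) → FreeAlgebra k (Fin 3) → Prop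
  | r1 : relF b g (X k 1 * X k 0) (g ^ 2 • (X k 0 * X k 1))
  | r2 : relF b g (X k 2 * X k 1)
      (-(g * b⁻¹) • (X k 2 * X k 0) + X k 0 * X k 2 + b • (X k 1 * X k 2))
  | r3 : relF b g (X k 2 * X k 2 * X k 0)
      ((g ^ 2 * b ^ 3) • (X k 1 * (X k 2 * X k 2)) + (-b) • (X k 2 * X k 0 * X k 2))
  | r4 : relF b g (X k 2 * (X k 0 * X k 0))
      ((g * b ^ 3) • (X k 0 * X k 1 * X k 2) + (g ^ 2 * b ^ 2) • (X k 1 * X k 2 * X k 0))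

/-- The algebra `ℱ(b,γ)`. -/
abbrev AlgF (b g : k) := RingQuot (relF k b g)

/-- The images of the generators in `ℱ(b,γ)`. -/
abbrev genF (b g : k) (i : Fin 3) : AlgF k b g := RingQuot.mkAlgHom k (relF k b g) (X k i)

theorem IsNormalElem.of_adjoin_eq_top {R A : Type*} [CommSemiring R] [Semiring A] [Algebra R A]
    {s : Set A} (hs : Algebra.adjoin R s = ⊤) {y : A}
    (hl : ∀ x ∈ s, ∃ b, y * x = b * y) (hr : ∀ x ∈ s, ∃ b, x * y = y * b) :
    IsNormalElem y := by
  constructor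
  · intro a
    induction (hs ▸ Algebra.mem_top : a ∈ Algebra.adjoin R s) using Algebra.adjoin_induction with
    | mem x hx => exact hl x hx
    | algebraMap r => exact ⟨algebraMap R A r, (Algebra.commutes r y).symm⟩
    | add a a' _ _ ha ha' =>
      obtain ⟨b, hb⟩ := ha
      obtain ⟨b', hb'⟩ := ha'
      exact ⟨b + b', by rw [mul_add, hb, hb', add_mul]⟩
    | mul a a' _ _ ha ha' =>
      obtain ⟨b, hb⟩ := ha
      obtain ⟨b', hb'⟩ := ha'
      exact ⟨b * b', by rw [← mul_assoc, hb, mul_assoc, hb', mul_assoc]⟩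
  · intro a
    induction (hs ▸ Algebra.mem_top : a ∈ Algebra.adjoin R s) using Algebra.adjoin_induction with
    | mem x hx => exact hr x hx
    | algebraMap r => exact ⟨algebraMap R A r, Algebra.commutes r y⟩
    | add a a' _ _ ha ha' =>
      obtain ⟨b, hb⟩ := ha
      obtain ⟨b', hb'⟩ := ha'
      exact ⟨b + b', by rw [add_mul, hb, hb', mul_add]⟩
    | mul a a' _ _ ha ha' =>
      obtain ⟨b, hb⟩ := ha
      obtain ⟨b', hb'⟩ := ha'
      exact ⟨b * b', by rw [mul_assoc, hb', ← mul_assoc, hb, mul_assoc]⟩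

theorem IsNormalElem.of_forall_mul_eq_smul {R A : Type*} [Field R] [Ring A] [Algebra R A]
    {s : Set A} (hs : Algebra.adjoin R s = ⊤) {y : A}
    (h : ∀ x ∈ s, ∃ c : R, c ≠ 0 ∧ y * x = c • (x * y)) : IsNormalElem y := by
  refine .of_adjoin_eq_top hs (fun x hx => ?_) (fun x hx => ?_) <;> obtain ⟨c, hc, hyx⟩ := h x hx
  · exact ⟨c • x, by rw [hyx, smul_mul_assoc]⟩
  · exact ⟨c⁻¹ • x, by rw [mul_smul_comm, hyx, smul_smul, inv_mul_cancel₀ hc, one_smul]⟩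

/-- The relations `relF k 1 g`, with products left-associated. -/
structure SatisfiesRelF {R A : Type*} [CommRing R] [Ring A] [Algebra R A] (g : R)
    (x₀ x₁ x₂ : A) : Prop where
  rel₁ : x₁ * x₀ = g ^ 2 • (x₀ * x₁)
  rel₂ : x₂ * x₁ = (-g) • (x₂ * x₀) + x₀ * x₂ + x₁ * x₂
  rel₃ : x₂ * x₂ * x₀ = g ^ 2 • (x₁ * x₂ * x₂) - x₂ * x₀ * x₂
  rel₄ : x₂ * x₀ * x₀ = g • (x₀ * x₁ * x₂) + g ^ 2 • (x₁ * x₂ * x₀)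

namespace SatisfiesRelF

section CommRing

variable {R A : Type*} [CommRing R] [Ring A] [Algebra R A] {g : R} {x₀ x₁ x₂ : A}

theorem mul_rel₁ (h : SatisfiesRelF g x₀ x₁ x₂) (z : A) :
    z * x₁ * x₀ = g ^ 2 • (z * x₀ * x₁) := by
  rw [mul_assoc, h.rel₁, mul_smul_comm, mul_assoc]

theorem mul_rel₂ (h : SatisfiesRelF g x₀ x₁ x₂) (z : A) :
    z * x₂ * x₁ = (-g) • (z * x₂ * x₀) + z * x₀ * x₂ + z * x₁ * x₂ := by
  simp only [mul_assoc z, h.rel₂, mul_add, mul_smul_comm]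

theorem mul_rel₃ (h : SatisfiesRelF g x₀ x₁ x₂) (z : A) :
    z * x₂ * x₂ * x₀ = g ^ 2 • (z * x₁ * x₂ * x₂) - z * x₂ * x₀ * x₂ := by
  simp only [mul_assoc z, h.rel₃, mul_sub, mul_smul_comm]

theorem mul_rel₄ (h : SatisfiesRelF g x₀ x₁ x₂) (z : A) :
    z * x₂ * x₀ * x₀ = g • (z * x₀ * x₁ * x₂) + g ^ 2 • (z * x₁ * x₂ * x₀) := by
  simp only [mul_assoc z, h.rel₄, mul_add, mul_smul_comm]

/-- Resolves the overlap of `rel₁` and `rel₂` in `x₂ x₁ x₀`. -/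
theorem rel₅ (h : SatisfiesRelF g x₀ x₁ x₂) (hg₃ : g ^ 3 = 1) :
    x₂ * x₀ * x₁ = g • (x₀ * x₂ * x₀) - x₀ * x₁ * x₂ := by
  have h₅ : g ^ 2 • (x₂ * x₀ * x₁) = x₀ * x₂ * x₀ - g ^ 2 • (x₀ * x₁ * x₂) := by
    rw [← h.mul_rel₁, h.rel₂]
    simp only [add_mul, smul_mul_assoc, h.rel₄]
    match_scalars <;> grind
  calc x₂ * x₀ * x₁ = g • g ^ 2 • (x₂ * x₀ * x₁) := by
        rw [smul_smul, ← pow_succ', hg₃, one_smul]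
    _ = g • (x₀ * x₂ * x₀) - x₀ * x₁ * x₂ := by
        rw [h₅]
        match_scalars <;> grind

theorem mul_rel₅ (h : SatisfiesRelF g x₀ x₁ x₂) (hg₃ : g ^ 3 = 1) (z : A) :
    z * x₂ * x₀ * x₁ = g • (z * x₀ * x₂ * x₀) - z * x₀ * x₁ * x₂ := by
  simp only [mul_assoc z, h.rel₅ hg₃, mul_sub, mul_smul_comm]

theorem commute_cube_add_cube (h : SatisfiesRelF g x₀ x₁ x₂) (hg : g ^ 2 + g + 1 = 0) :
    Commute (x₀ ^ 3 + x₁ ^ 3) x₀ ∧ Commute (x₀ ^ 3 + x₁ ^ 3) x₁ ∧ Commute (x₀ ^ 3 + x₁ ^ 3) x₂ := by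
  have hg₃ : g ^ 3 = 1 := by linear_combination (g - 1) * hg
  refine ⟨?_, ?_, ?_⟩
  all_goals
    simp only [Commute, SemiconjBy, pow_three', mul_add, add_mul, smul_add, smul_sub, sub_mul,
      smul_mul_assoc, smul_smul, ← mul_assoc, h.rel₁, h.mul_rel₁, h.rel₂, h.mul_rel₂, h.rel₄,
      h.mul_rel₄, h.rel₅ hg₃, h.mul_rel₅ hg₃]
    match_scalars <;> grind

theorem cube_x₂_mul (h : SatisfiesRelF g x₀ x₁ x₂) (hg₃ : g ^ 3 = 1) :
    x₂ ^ 3 * x₀ = g ^ 2 • (x₀ * x₂ ^ 3) ∧ x₂ ^ 3 * x₁ = g ^ 2 • (x₁ * x₂ ^ 3) := by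
  constructor
  all_goals
    simp only [pow_three', add_mul, smul_add, smul_sub, sub_mul, smul_mul_assoc, smul_smul,
      ← mul_assoc, h.rel₂, h.mul_rel₂, h.rel₃, h.mul_rel₃]
    match_scalars <;> grind

theorem sq_x₀_mul_x₁_mul_x₀ (h : SatisfiesRelF g x₀ x₁ x₂) :
    x₀ ^ 2 * x₁ * x₀ = g ^ 2 • (x₀ * (x₀ ^ 2 * x₁)) := by
  simp only [sq, ← mul_assoc, h.mul_rel₁]

theorem sq_x₀_mul_x₁_mul_x₁ (h : SatisfiesRelF g x₀ x₁ x₂) (hg₃ : g ^ 3 = 1) :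
    x₀ ^ 2 * x₁ * x₁ = g ^ 2 • (x₁ * (x₀ ^ 2 * x₁)) := by
  simp only [sq, smul_mul_assoc, smul_smul, ← mul_assoc, h.rel₁, h.mul_rel₁]
  match_scalars
  grind

theorem commute_sq_x₀_mul_x₁_x₂ (h : SatisfiesRelF g x₀ x₁ x₂) (hg₃ : g ^ 3 = 1) :
    Commute (x₀ ^ 2 * x₁) x₂ := by
  simp only [Commute, SemiconjBy, sq, add_mul, smul_add, smul_sub, smul_mul_assoc, smul_smul,
    ← mul_assoc, h.rel₁, h.mul_rel₁, h.mul_rel₂, h.rel₄, h.mul_rel₅ hg₃]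
  match_scalars <;> grind

end CommRing

section Field

variable {R A : Type*} [Field R] [Ring A] [Algebra R A] {g : R} {x₀ x₁ x₂ : A}

theorem isNormalElem_cube_add_cube (h : SatisfiesRelF g x₀ x₁ x₂) (hg : g ^ 2 + g + 1 = 0)
    (hgen : Algebra.adjoin R {x₀, x₁, x₂} = ⊤) : IsNormalElem (x₀ ^ 3 + x₁ ^ 3) := by
  obtain ⟨h₀, h₁, h₂⟩ := h.commute_cube_add_cube hg
  refine .of_forall_mul_eq_smul hgen ?_
  simp only [Set.forall_mem_insert, Set.mem_singleton_iff, forall_eq]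
  exact ⟨⟨1, one_ne_zero, h₀.eq.trans (one_smul R _).symm⟩,
    ⟨1, one_ne_zero, h₁.eq.trans (one_smul R _).symm⟩,
    ⟨1, one_ne_zero, h₂.eq.trans (one_smul R _).symm⟩⟩

theorem isNormalElem_cube_x₂ (h : SatisfiesRelF g x₀ x₁ x₂) (hg₃ : g ^ 3 = 1)
    (hgen : Algebra.adjoin R {x₀, x₁, x₂} = ⊤) : IsNormalElem (x₂ ^ 3) := by
  have hg₀ : g ^ 2 ≠ 0 := pow_ne_zero 2 (by rintro rfl; simp at hg₃)
  obtain ⟨h₀, h₁⟩ := h.cube_x₂_mul hg₃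
  refine .of_forall_mul_eq_smul hgen ?_
  simp only [Set.forall_mem_insert, Set.mem_singleton_iff, forall_eq]
  exact ⟨⟨g ^ 2, hg₀, h₀⟩, ⟨g ^ 2, hg₀, h₁⟩,
    ⟨1, one_ne_zero, by rw [one_smul, ← pow_succ, ← pow_succ']⟩⟩

theorem isNormalElem_sq_x₀_mul_x₁ (h : SatisfiesRelF g x₀ x₁ x₂) (hg₃ : g ^ 3 = 1)
    (hgen : Algebra.adjoin R {x₀, x₁, x₂} = ⊤) : IsNormalElem (x₀ ^ 2 * x₁) := by
  have hg₀ : g ^ 2 ≠ 0 := pow_ne_zero 2 (by rintro rfl; simp at hg₃)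
  refine .of_forall_mul_eq_smul hgen ?_
  simp only [Set.forall_mem_insert, Set.mem_singleton_iff, forall_eq]
  exact ⟨⟨g ^ 2, hg₀, h.sq_x₀_mul_x₁_mul_x₀⟩, ⟨g ^ 2, hg₀, h.sq_x₀_mul_x₁_mul_x₁ hg₃⟩,
    ⟨1, one_ne_zero, (h.commute_sq_x₀_mul_x₁_x₂ hg₃).eq.trans (one_smul R _).symm⟩⟩

end Field

end SatisfiesRelF

theorem adjoin_genF_eq_top (b g : k) :
    Algebra.adjoin k {genF k b g 0, genF k b g 1, genF k b g 2} = ⊤ := by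
  have : ({genF k b g 0, genF k b g 1, genF k b g 2} : Set (AlgF k b g)) =
      RingQuot.mkAlgHom k (relF k b g) '' Set.range (ι k) := by
    rw [← Set.range_comp]
    ext; simp [Fin.exists_fin_succ, eq_comm]
  rw [this, Algebra.adjoin_image, FreeAlgebra.adjoin_range_ι, Algebra.map_top,
    AlgHom.range_eq_top]
  exact RingQuot.mkAlgHom_surjective k (relF k b g)

theorem satisfiesRelF_genF (g : k) :
    SatisfiesRelF g (genF k 1 g 0) (genF k 1 g 1) (genF k 1 g 2) where
  rel₁ := by
    simpa only [map_mul, map_smul] using RingQuot.mkAlgHom_rel k (relF.r1 (b := 1) (g := g))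
  rel₂ := by
    simpa only [map_mul, map_smul, map_add, inv_one, mul_one, one_smul] using
      RingQuot.mkAlgHom_rel k (relF.r2 (b := 1) (g := g))
  rel₃ := by
    simpa only [mul_assoc, sub_eq_add_neg, map_mul, one_pow, mul_one, neg_smul, one_smul, map_add,
      map_smul, map_neg] using RingQuot.mkAlgHom_rel k (relF.r3 (b := 1) (g := g))
  rel₄ := by
    simpa only [mul_assoc, map_mul, one_pow, mul_one, map_add, map_smul] using
      RingQuot.mkAlgHom_rel k (relF.r4 (b := 1) (g := g))

/-- in `ℱ = ℱ(1,γ)` with `γ` a primitive cube root of unity, the elements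
`x₁³ + x₂³`, `x₃³` and `x₁²x₂` are all normal. -/
theorem normal_elems_in_F (g : k) (hg3 : g ^ 3 = 1) (hg1 : g ≠ 1) :
    IsNormalElem (genF k 1 g 0 * genF k 1 g 0 * genF k 1 g 0 +
      genF k 1 g 1 * genF k 1 g 1 * genF k 1 g 1) ∧
    IsNormalElem (genF k 1 g 2 * genF k 1 g 2 * genF k 1 g 2) ∧
    IsNormalElem (genF k 1 g 0 * genF k 1 g 0 * genF k 1 g 1) := by
  have hg : g ^ 2 + g + 1 = 0 := by
    have : (g - 1) * (g ^ 2 + g + 1) = 0 := by linear_combination hg3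
    exact (mul_eq_zero.1 this).resolve_left (sub_ne_zero.2 hg1)
  have h := satisfiesRelF_genF k g
  have hgen := adjoin_genF_eq_top k 1 g
  refine ⟨?_, ?_, ?_⟩
  · simpa only [pow_three'] using h.isNormalElem_cube_add_cube hg hgen
  · simpa only [pow_three'] using h.isNormalElem_cube_x₂ hg3 hgen
  · simpa only [sq] using h.isNormalElem_sq_x₀_mul_x₁ hg3 hgen
end
end

section
/- For b ∈ k^×, the map x_1 ↦ b x_2, x_2 ↦ γ b^{-1} x_1, x_3 ↦ x_3 extends to a graded k-algebra isomorphism from ℱ(b,γ) to underline-ℱ(γ^2 b, γ^2), where γ is a primitive cube root of unity. -/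
noncomputable section

open FreeAlgebra

variable (k : Type) [Field k]

/-- The defining relations of the algebra `ℱ̲(b,γ)`. -/
inductive relFu (b g : k) : FreeAlgebra k (Fin 3) → FreeAlgebra k (Fin 3) → Prop
  | r1 : relFu b g (X k 1 * X k 0) (g ^ 2 • (X k 0 * X k 1))
  | r2 : relFu b g (X k 2 * X k 1)
      (-(g * b⁻¹) • (X k 2 * X k 0) + X k 0 * X k 2 + b • (X k 1 * X k 2))
  | r3 : relFu b g (X k 2 * X k 2 * X k 0)
      ((g ^ 2 * b ^ 2) • (X k 0 * (X k 2 * X k 2)) + (-(b ^ 3)) • (X k 1 * (X k 2 * X k 2)) +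
        (-b) • (X k 2 * X k 0 * X k 2))
  | r4 : relFu b g (X k 2 * (X k 0 * X k 0))
      ((-(b ^ 4)) • (X k 1 * (X k 1 * X k 2)) + (g ^ 2 * b) • (X k 0 * X k 2 * X k 0) +
        (-(b ^ 2)) • (X k 1 * X k 2 * X k 0))

/-- The algebra `ℱ̲(b,γ)`. -/
abbrev AlgFu (b g : k) := RingQuot (relFu k b g)

/-- The images of the generators in `ℱ̲(b,γ)`. -/
abbrev genFu (b g : k) (i : Fin 3) : AlgFu k b g := RingQuot.mkAlgHom k (relFu k b g) (X k i)


/-! The inverse of `x₁ ↦ b x₂, x₂ ↦ γ b⁻¹ x₁, x₃ ↦ x₃` is the assignment of the same shape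
`x₁ ↦ γ²b x₂, x₂ ↦ b⁻¹ x₁, x₃ ↦ x₃` (the two compose to the identity on generators because
`γ³ = 1`), so it suffices that each assignment respects the defining relations of its source.
The quadratic relations go to scalar multiples of the quadratic relations of the target. Each cubic
relation goes to a combination of the target relations multiplied on the left or right by a
generator, with coefficients that match because `γ² + γ + 1 = 0`. -/

namespace RingQuot

variable {R : Type*} [CommSemiring R] {ι κ : Type*}
  {r : FreeAlgebra R ι → FreeAlgebra R ι → Prop} {s : FreeAlgebra R κ → FreeAlgebra R κ → Prop}
  (f : ι → RingQuot s) (f' : κ → RingQuot r)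
  (hf : ∀ ⦃x y⦄, r x y → FreeAlgebra.lift R f x = FreeAlgebra.lift R f y)
  (hf' : ∀ ⦃x y⦄, s x y → FreeAlgebra.lift R f' x = FreeAlgebra.lift R f' y)
  (hf'f : ∀ i, liftAlgHom R ⟨FreeAlgebra.lift R f', hf'⟩ (f i) =
    mkAlgHom R r (FreeAlgebra.ι R i))
  (hff' : ∀ j, liftAlgHom R ⟨FreeAlgebra.lift R f, hf⟩ (f' j) =
    mkAlgHom R s (FreeAlgebra.ι R j))

def algEquivOfGenerators : RingQuot r ≃ₐ[R] RingQuot s :=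
  AlgEquiv.ofAlgHom (liftAlgHom R ⟨FreeAlgebra.lift R f, hf⟩)
    (liftAlgHom R ⟨FreeAlgebra.lift R f', hf'⟩)
    (ringQuot_ext' _ _ _ <| FreeAlgebra.hom_ext <| funext fun j => by simp [hff'])
    (ringQuot_ext' _ _ _ <| FreeAlgebra.hom_ext <| funext fun i => by simp [hf'f])

@[simp]
theorem algEquivOfGenerators_mkAlgHom_ι (i : ι) :
    algEquivOfGenerators f f' hf hf' hf'f hff' (mkAlgHom R r (FreeAlgebra.ι R i)) = f i := by
  simp [algEquivOfGenerators]

end RingQuot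

section Relations

variable {k} {A : Type*} [Ring A] [Algebra k A]

structure SatisfiesRelF_s16 (b g : k) (x : Fin 3 → A) : Prop where
  r1 : x 1 * x 0 = g ^ 2 • (x 0 * x 1)
  r2 : x 2 * x 1 = -(g * b⁻¹) • (x 2 * x 0) + x 0 * x 2 + b • (x 1 * x 2)
  r3 : x 2 * x 2 * x 0 = (g ^ 2 * b ^ 3) • (x 1 * (x 2 * x 2)) + (-b) • (x 2 * x 0 * x 2)
  r4 : x 2 * (x 0 * x 0) =
      (g * b ^ 3) • (x 0 * x 1 * x 2) + (g ^ 2 * b ^ 2) • (x 1 * x 2 * x 0)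

structure SatisfiesRelFu (b g : k) (x : Fin 3 → A) : Prop where
  r1 : x 1 * x 0 = g ^ 2 • (x 0 * x 1)
  r2 : x 2 * x 1 = -(g * b⁻¹) • (x 2 * x 0) + x 0 * x 2 + b • (x 1 * x 2)
  r3 : x 2 * x 2 * x 0 = (g ^ 2 * b ^ 2) • (x 0 * (x 2 * x 2)) +
      (-(b ^ 3)) • (x 1 * (x 2 * x 2)) + (-b) • (x 2 * x 0 * x 2)
  r4 : x 2 * (x 0 * x 0) = (-(b ^ 4)) • (x 1 * (x 1 * x 2)) +
      (g ^ 2 * b) • (x 0 * x 2 * x 0) + (-(b ^ 2)) • (x 1 * x 2 * x 0)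

theorem satisfiesRelF_genF_s16 (b g : k) : SatisfiesRelF_s16 b g (genF k b g) := by
  constructor <;> simp only [← map_mul, ← map_smul, ← map_add] <;>
    exact RingQuot.mkAlgHom_rel k (by constructor)

theorem satisfiesRelFu_genFu (b g : k) : SatisfiesRelFu b g (genFu k b g) := by
  constructor <;> simp only [← map_mul, ← map_smul, ← map_add] <;>
    exact RingQuot.mkAlgHom_rel k (by constructor)

variable {b g : k}

theorem SatisfiesRelF_s16.lift_eq {x : Fin 3 → A} (hx : SatisfiesRelF_s16 b g x)
    ⦃p q : FreeAlgebra k (Fin 3)⦄ (h : relF k b g p q) :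
    FreeAlgebra.lift k x p = FreeAlgebra.lift k x q := by
  cases h <;> simp only [map_mul, map_add, map_smul, FreeAlgebra.lift_ι_apply]
  exacts [hx.r1, hx.r2, hx.r3, hx.r4]

theorem SatisfiesRelFu.lift_eq {x : Fin 3 → A} (hx : SatisfiesRelFu b g x)
    ⦃p q : FreeAlgebra k (Fin 3)⦄ (h : relFu k b g p q) :
    FreeAlgebra.lift k x p = FreeAlgebra.lift k x q := by
  cases h <;> simp only [map_mul, map_add, map_smul, FreeAlgebra.lift_ι_apply]
  exacts [hx.r1, hx.r2, hx.r3, hx.r4]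

theorem SatisfiesRelFu.satisfiesRelF_swap (hb : b ≠ 0) (hg : g ^ 2 + g + 1 = 0)
    {y : Fin 3 → A} (hy : SatisfiesRelFu (g ^ 2 * b) (g ^ 2) y) :
    SatisfiesRelF_s16 b g ![b • y 1, (g * b⁻¹) • y 0, y 2] := by
  obtain ⟨R1, R2, R3, R4⟩ := hy
  constructor <;> simp only [Matrix.cons_val_zero, Matrix.cons_val_one, Matrix.cons_val_two,
    Matrix.head_cons, Matrix.tail_cons]
  on_goal 1 => linear_combination (norm := skip) -R1
  on_goal 2 => linear_combination (norm := skip) g • R2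
  on_goal 3 => linear_combination (norm := skip) b • (y 2 * R2) - R3 -
      (g * b ^ 2) • (R2 * y 2)
  on_goal 4 => linear_combination (norm := skip) b ^ 2 • (R2 * y 1) +
      (g ^ 2 * b ^ 3) • (y 1 * R2) + (g ^ 2 * b) • (y 2 * R1) - (g ^ 2 * b) • (R2 * y 0) +
      g ^ 2 • R4
  all_goals
    simp only [mul_add, add_mul, smul_add, mul_smul_comm, smul_mul_assoc, smul_smul, ← mul_assoc]
    match_scalars <;> grind

theorem SatisfiesRelF_s16.satisfiesRelFu_swap (hb : b ≠ 0) (hg : g ^ 2 + g + 1 = 0)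
    {x : Fin 3 → A} (hx : SatisfiesRelF_s16 b g x) :
    SatisfiesRelFu (g ^ 2 * b) (g ^ 2) ![(g ^ 2 * b) • x 1, b⁻¹ • x 0, x 2] := by
  obtain ⟨F1, F2, F3, F4⟩ := hx
  constructor <;> simp only [Matrix.cons_val_zero, Matrix.cons_val_one, Matrix.cons_val_two,
    Matrix.head_cons, Matrix.tail_cons]
  on_goal 1 => linear_combination (norm := skip) -F1
  on_goal 2 => linear_combination (norm := skip) g ^ 2 • F2
  on_goal 3 => linear_combination (norm := skip) (g ^ 2 * b) • (x 2 * F2) - F3 -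
      b ^ 2 • (F2 * x 2)
  on_goal 4 => linear_combination (norm := skip) (g * b ^ 2) • (F2 * x 1) -
      (g ^ 2 * b ^ 2) • (x 0 * F2) + b • (x 2 * F1) - b • (F2 * x 0) + g • F4
  all_goals
    simp only [mul_add, add_mul, smul_add, mul_smul_comm, smul_mul_assoc, smul_smul, ← mul_assoc]
    match_scalars <;> grind

end Relations

/-- for `b ≠ 0` and `γ` a primitive cube root of unity, the map
`x₁ ↦ b x₂, x₂ ↦ γ b⁻¹ x₁, x₃ ↦ x₃` extends to a graded algebra isomorphism
`ℱ(b,γ) → ℱ̲(γ²b, γ²)`. -/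
theorem iso_F_to_Fu (b g : k) (hb : b ≠ 0) (hg3 : g ^ 3 = 1) (hg1 : g ≠ 1) :
    ∃ σ : AlgF k b g ≃ₐ[k] AlgFu k (g ^ 2 * b) (g ^ 2),
      σ (genF k b g 0) = b • genFu k (g ^ 2 * b) (g ^ 2) 1 ∧
      σ (genF k b g 1) = (g * b⁻¹) • genFu k (g ^ 2 * b) (g ^ 2) 0 ∧
      σ (genF k b g 2) = genFu k (g ^ 2 * b) (g ^ 2) 2 := by
  have hg : g ^ 2 + g + 1 = 0 := (mul_eq_zero.mp (by linear_combination hg3 :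
    (g - 1) * (g ^ 2 + g + 1) = 0)).resolve_left (sub_ne_zero.mpr hg1)
  have hgb : g * b⁻¹ * (g ^ 2 * b) = 1 := by field_simp; exact hg3
  have hbg : g ^ 2 * b * (g * b⁻¹) = 1 := by rw [mul_comm, hgb]
  refine ⟨RingQuot.algEquivOfGenerators _ _
    ((satisfiesRelFu_genFu _ _).satisfiesRelF_swap hb hg).lift_eq
    ((satisfiesRelF_genF_s16 b g).satisfiesRelFu_swap hb hg).lift_eq ?_ ?_, ?_, ?_, ?_⟩
  · intro i; fin_cases i <;> simp [smul_smul, hb, hgb]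
  · intro i; fin_cases i <;> simp [smul_smul, hb, hbg]
  all_goals simp
end
end

section
/- For b ∈ k^×, the element y := x_3x_1 - x_1x_3 is a normal element of ℋ(1) = k⟨x_1,x_2,x_3⟩/(x_2x_1 - x_1x_2 - x_1^2, x_3x_2 - 2x_1x_3 - x_2x_3, x_3^2x_1 + x_1x_3^2 - 2x_3x_1x_3, x_3x_1^2 + x_1^2x_3 - 2x_1x_3x_1). -/
noncomputable section

open FreeAlgebra

variable (k : Type) [Field k]

/-- The defining relations of `ℋ(1)`. -/
inductive relH : FreeAlgebra k (Fin 3) → FreeAlgebra k (Fin 3) → Prop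
  | r1 : relH (X k 1 * X k 0) (X k 0 * X k 1 + X k 0 * X k 0)
  | r2 : relH (X k 2 * X k 1) ((2 : k) • (X k 0 * X k 2) + X k 1 * X k 2)
  | r3 : relH (X k 2 * X k 2 * X k 0) (-(X k 0 * (X k 2 * X k 2)) + (2 : k) • (X k 2 * X k 0 * X k 2))
  | r4 : relH (X k 2 * (X k 0 * X k 0)) (-(X k 0 * X k 0 * X k 2) + (2 : k) • (X k 0 * X k 2 * X k 0))

/-- The algebra `ℋ(1)`. -/
abbrev AlgH := RingQuot (relH k)

/-- The images of the generators in `ℋ(1)`. -/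
abbrev genH (i : Fin 3) : AlgH k := RingQuot.mkAlgHom k (relH k) (X k i)

/-!
The element `y = x₃x₁ - x₁x₃` is in fact central in `ℋ(1)`, hence normal, and it suffices
that `y` commutes with the three generators. With `a = x₁`, `c = x₂`, `z = x₃`, the relations say
`[c, a] = a²`, `[z, c] = 2az`, `[[z, a], z] = 0` and `[[z, a], a] = 0`; the last two are the
commutations with `z` and `a`, and the Jacobi identity turns `[[z, a], c]` into
`[z, -a²] + [2az, a] = -[[z, a], a] = 0`.
-/

theorem IsNormalElem.of_forall_commute {A : Type*} [Mul A] {y : A} (h : ∀ a, Commute y a) :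
    IsNormalElem y :=
  ⟨fun a => ⟨a, h a⟩, fun a => ⟨a, (h a).symm⟩⟩

theorem FreeAlgebra.commute_of_surjective_of_forall_commute_ι {R X A : Type*} [CommSemiring R]
    [Semiring A] [Algebra R A] {f : FreeAlgebra R X →ₐ[R] A} (hf : Function.Surjective f)
    {y : A} (h : ∀ i, Commute y (f (ι R i))) (a : A) : Commute y a := by
  obtain ⟨p, rfl⟩ := hf a
  have hp : f p ∈ Algebra.adjoin R (f '' Set.range (ι R)) := by
    rw [Algebra.adjoin_image, adjoin_range_ι]
    exact Subalgebra.mem_map.mpr ⟨p, Algebra.mem_top, rfl⟩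
  refine Algebra.commute_of_mem_adjoin_of_forall_mem_commute hp ?_
  rintro _ ⟨_, ⟨i, rfl⟩, rfl⟩
  exact h i

section Relations

variable {A : Type*} [Ring A] {a c z : A}

theorem commute_mul_sub_mul_right_of_rel (h : z * (a * a) = -(a * a * z) + 2 * (a * z * a)) :
    Commute (z * a - a * z) a := by
  rw [commute_iff_eq, ← sub_eq_zero]
  calc (z * a - a * z) * a - a * (z * a - a * z)
      = z * (a * a) - (-(a * a * z) + 2 * (a * z * a)) := by noncomm_ring
    _ = 0 := by rw [h, sub_self]

theorem commute_mul_sub_mul_left_of_rel (h : z * z * a = -(a * (z * z)) + 2 * (z * a * z)) :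
    Commute (z * a - a * z) z := by
  rw [commute_iff_eq, ← sub_eq_zero]
  calc (z * a - a * z) * z - z * (z * a - a * z)
      = -(z * z * a - (-(a * (z * z)) + 2 * (z * a * z))) := by noncomm_ring
    _ = 0 := by rw [h, sub_self, neg_zero]

theorem commute_mul_sub_mul_of_rels (h₁ : c * a = a * c + a * a)
    (h₂ : z * c = 2 * (a * z) + c * z) (h₄ : z * (a * a) = -(a * a * z) + 2 * (a * z * a)) :
    Commute (z * a - a * z) c := by
  rw [commute_iff_eq, ← sub_eq_zero]
  rw [← sub_eq_zero] at h₁ h₂ h₄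
  calc (z * a - a * z) * c - c * (z * a - a * z)
      = -(z * (c * a - (a * c + a * a))) + (z * c - (2 * (a * z) + c * z)) * a
          - a * (z * c - (2 * (a * z) + c * z)) + (c * a - (a * c + a * a)) * z
          - (z * (a * a) - (-(a * a * z) + 2 * (a * z * a))) := by noncomm_ring
    _ = 0 := by rw [h₁, h₂, h₄]; noncomm_ring

end Relations

section AlgH

variable {k}

theorem genH_rel1 : genH k 1 * genH k 0 = genH k 0 * genH k 1 + genH k 0 * genH k 0 := by
  simpa only [map_mul, map_add] using RingQuot.mkAlgHom_rel k (relH.r1 (k := k))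

theorem genH_rel2 : genH k 2 * genH k 1 = 2 * (genH k 0 * genH k 2) + genH k 1 * genH k 2 := by
  simpa only [map_mul, map_add, ofNat_smul_eq_nsmul, nsmul_eq_mul, Nat.cast_ofNat, map_ofNat]
    using RingQuot.mkAlgHom_rel k (relH.r2 (k := k))

theorem genH_rel3 :
    genH k 2 * genH k 2 * genH k 0
      = -(genH k 0 * (genH k 2 * genH k 2)) + 2 * (genH k 2 * genH k 0 * genH k 2) := by
  simpa only [map_mul, map_add, map_neg, ofNat_smul_eq_nsmul, nsmul_eq_mul, Nat.cast_ofNat,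
    map_ofNat]
    using RingQuot.mkAlgHom_rel k (relH.r3 (k := k))

theorem genH_rel4 :
    genH k 2 * (genH k 0 * genH k 0)
      = -(genH k 0 * genH k 0 * genH k 2) + 2 * (genH k 0 * genH k 2 * genH k 0) := by
  simpa only [map_mul, map_add, map_neg, ofNat_smul_eq_nsmul, nsmul_eq_mul, Nat.cast_ofNat,
    map_ofNat]
    using RingQuot.mkAlgHom_rel k (relH.r4 (k := k))

theorem commute_genH (i : Fin 3) :
    Commute (genH k 2 * genH k 0 - genH k 0 * genH k 2) (genH k i) := by
  fin_cases i
  · exact commute_mul_sub_mul_right_of_rel genH_rel4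
  · exact commute_mul_sub_mul_of_rels genH_rel1 genH_rel2 genH_rel4
  · exact commute_mul_sub_mul_left_of_rel genH_rel3

end AlgH

theorem normal_elem_in_H :
    IsNormalElem (genH k 2 * genH k 0 - genH k 0 * genH k 2) :=
  IsNormalElem.of_forall_commute <|
    FreeAlgebra.commute_of_surjective_of_forall_commute_ι
      (RingQuot.mkAlgHom_surjective k (relH k)) commute_genH
end
end
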